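/- arXiv:2508.07695 — 10 statements merged into one kernel-verified Lean document; each statement's English description precedes it below -/
import Mathlib

section
/- Let η > β²h(k)²/(4α⁴) and define φ_η(s) = s·e^{η s²}. Then for all s ∈ ℝ, α·φ_η'(s) − (β h(k)/α)·|φ_η(s)| ≥ α/2. -/
theorem stmt1 (α β hk η : ℝ) (hα : 0 < α) (hαβ : α ≤ β) (hhk : 0 ≤ hk)
    (hη : η > β ^ 2 * hk ^ 2 / (4 * α ^ 4)) (s : ℝ) :
    α * ((1 + 2 * η * s ^ 2) * Real.exp (η * s ^ 2))
      - (β * hk / α) * |s * Real.exp (η * s ^ 2)| ≥ α / 2 := by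
  have hα4 : (0:ℝ) < 4 * α ^ 4 := by positivity
  have hηpos : 0 < η := lt_of_le_of_lt (by positivity) hη
  have hkey' : β ^ 2 * hk ^ 2 < η * (4 * α ^ 4) := (div_lt_iff₀ hα4).mp hη
  have hE : 1 ≤ Real.exp (η * s ^ 2) := Real.one_le_exp (by positivity)
  have hEpos : 0 < Real.exp (η * s ^ 2) := Real.exp_pos _
  have habs : |s * Real.exp (η * s ^ 2)| = |s| * Real.exp (η * s ^ 2) := by
    rw [abs_mul, abs_of_pos hEpos]
  rw [habs]
  have hs : 0 ≤ |s| := abs_nonneg s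
  have hs2 : |s| ^ 2 = s ^ 2 := sq_abs s
  have key : α * (1 + 2 * η * s ^ 2) - (β * hk / α) * |s| ≥ α / 2 := by
    have h4 : β * hk * |s| / α ≤ 2 * α * η * s ^ 2 + α / 2 := by
      rw [div_le_iff₀ hα, ← hs2]
      have h8 : (0:ℝ) < 8 * α ^ 2 * η := by positivity
      have h6 : 8 * α ^ 2 * η * (β * hk * |s|)
          < 8 * α ^ 2 * η * ((2 * α * η * |s| ^ 2 + α / 2) * α) := by
        nlinarith [sq_nonneg (4 * α ^ 2 * η * |s| - β * hk)]
      exact le_of_lt (lt_of_mul_lt_mul_left h6 (le_of_lt h8))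
    have h5 : (β * hk / α) * |s| = β * hk * |s| / α := by ring
    rw [h5]
    nlinarith [h4]
  nlinarith [mul_le_mul_of_nonneg_left hE (le_of_lt (half_pos hα)),
    mul_le_mul_of_nonneg_right key (le_of_lt hEpos)]
end

section
/- If u : [−1,1] → ℝ is C², satisfies −u''(s) + (u'(s))²/(1 − u(s)) = λ for s ≠ 0 with u(s) < 1 for s ≠ 0, u(−1)=u(1)=0, 0 ≤ u ≤ 1, and u(0) = 1, then u''(0) = −λ/3. -/
/-!
Along a solution of `-u'' + u'²/(1 - u) = λ` the quantity `u'²(1 - u)² - (2λ/3)(1 - u)³` is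
conserved. It vanishes at `0` because `u(0) = 1`, so `u'² = (2λ/3)(1 - u)` for `0 < s < 1`, and
substituting this into the equation gives `u'' = -λ/3` there; continuity of `u''` carries the value
to `s = 0`.
-/

open Set

/-- With `p = v²` regarded as a function of `u`, the equation `-w + v²/(1 - u) = λ` becomes the
linear equation `p'/2 = p/(1 - u) - λ`, whose solutions are `p = (2λ/3)(1 - u) + C/(1 - u)²`;
this is `C`. -/
noncomputable def energy (lam : ℝ) (u v : ℝ → ℝ) (x : ℝ) : ℝ :=
  v x ^ 2 * (1 - u x) ^ 2 - 2 * lam / 3 * (1 - u x) ^ 3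

section Energy

variable {lam : ℝ} {u v w : ℝ → ℝ}

theorem hasDerivAt_energy {s : ℝ} (hu : HasDerivAt u (v s) s) (hv : HasDerivAt v (w s) s) :
    HasDerivAt (energy lam u v)
      (2 * v s * (1 - u s) * (w s * (1 - u s) - v s ^ 2 + lam * (1 - u s))) s := by
  have hu' : HasDerivAt (fun x => 1 - u x) (-v s) s := hu.const_sub 1
  have h := ((hv.fun_pow 2).fun_mul (hu'.fun_pow 2)).fun_sub
    ((hu'.fun_pow 3).const_mul (2 * lam / 3))
  exact h.congr_deriv (by push_cast; ring)

theorem hasDerivAt_energy_eq_zero {s : ℝ} (hu : HasDerivAt u (v s) s)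
    (hv : HasDerivAt v (w s) s) (hs : u s = 1 ∨ -w s + v s ^ 2 / (1 - u s) = lam) :
    HasDerivAt (energy lam u v) 0 s := by
  convert hasDerivAt_energy hu hv using 1
  rcases hs with hus | hode
  · simp [hus]
  · by_cases hus : 1 - u s = 0
    · simp [hus]
    · have hsq : v s ^ 2 = (lam + w s) * (1 - u s) := by
        rw [← div_eq_iff hus]
        linarith
      linear_combination (2 * v s * (1 - u s)) * hsq

theorem energy_eq_zero_of_eq_one {a b : ℝ} (hu : ∀ s, HasDerivAt u (v s) s)
    (hv : ∀ s, HasDerivAt v (w s) s) (ha : u a = 1)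
    (hode : ∀ s ∈ Ioo a b, -w s + v s ^ 2 / (1 - u s) = lam) :
    ∀ s ∈ Icc a b, energy lam u v s = 0 := by
  have hderiv (s : ℝ) (hs : s ∈ Ico a b) : HasDerivAt (energy lam u v) 0 s := by
    rcases hs.1.eq_or_lt with has | has
    · exact hasDerivAt_energy_eq_zero (hu s) (hv s) (Or.inl (has ▸ ha))
    · exact hasDerivAt_energy_eq_zero (hu s) (hv s) (Or.inr (hode s ⟨has, hs.2⟩))
  have hcont : Continuous (energy lam u v) :=
    continuous_iff_continuousAt.2 fun s => (hasDerivAt_energy (hu s) (hv s)).continuousAt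
  have hconst := constant_of_has_deriv_right_zero hcont.continuousOn
    fun s hs => (hderiv s hs).hasDerivWithinAt
  intro s hs
  rw [hconst s hs, energy, ha]
  ring

theorem eq_neg_div_three_of_energy_eq_zero {s : ℝ} (hlt : u s < 1)
    (hode : -w s + v s ^ 2 / (1 - u s) = lam) (hE : energy lam u v s = 0) :
    w s = -lam / 3 := by
  have hpos : 0 < 1 - u s := sub_pos.mpr hlt
  have hsq : v s ^ 2 = 2 * lam / 3 * (1 - u s) := by
    have : (v s ^ 2 - 2 * lam / 3 * (1 - u s)) * (1 - u s) ^ 2 = 0 := by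
      rw [energy] at hE
      linear_combination hE
    simpa [hpos.ne', sub_eq_zero] using this
  rw [hsq, mul_div_cancel_right₀ _ hpos.ne'] at hode
  linarith

end Energy

theorem stmt3_general (lam : ℝ) (u : ℝ → ℝ) (hu : ContDiff ℝ 2 u)
    (heq : ∀ s ∈ Set.Icc (-1 : ℝ) 1, s ≠ 0 →
      -(deriv (deriv u) s) + (deriv u s) ^ 2 / (1 - u s) = lam)
    (hlt : ∀ s ∈ Set.Icc (-1 : ℝ) 1, s ≠ 0 → u s < 1)
    (h0 : u 0 = 1) :
    deriv (deriv u) 0 = -lam / 3 := by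
  have hu' : ContDiff ℝ 1 (deriv u) := hu.deriv'
  have hmem {s : ℝ} (hs : s ∈ Ioo (0 : ℝ) 1) : s ∈ Icc (-1 : ℝ) 1 ∧ s ≠ 0 :=
    ⟨⟨by linarith [hs.1], hs.2.le⟩, hs.1.ne'⟩
  have hode (s : ℝ) (hs : s ∈ Ioo (0 : ℝ) 1) := heq s (hmem hs).1 (hmem hs).2
  have hE := energy_eq_zero_of_eq_one
    (fun s => (hu.differentiable two_ne_zero s).hasDerivAt)
    (fun s => (hu'.differentiable one_ne_zero s).hasDerivAt) h0 hode
  have hconst : EqOn (deriv (deriv u)) (fun _ => -lam / 3) (Ioo 0 1) := fun s hs =>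
    eq_neg_div_three_of_energy_eq_zero (hlt s (hmem hs).1 (hmem hs).2) (hode s hs)
      (hE s (Ioo_subset_Icc_self hs))
  exact hconst.of_subset_closure (hu'.continuous_deriv le_rfl).continuousOn continuousOn_const
    Ioo_subset_Icc_self (by rw [closure_Ioo zero_ne_one]) (left_mem_Icc.mpr zero_le_one)

theorem stmt3 (lam : ℝ) (hlam : 0 < lam) (u : ℝ → ℝ) (hu : ContDiff ℝ 2 u)
    (heq : ∀ s ∈ Set.Icc (-1 : ℝ) 1, s ≠ 0 →
      -(deriv (deriv u) s) + (deriv u s) ^ 2 / (1 - u s) = lam)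
    (hlt : ∀ s ∈ Set.Icc (-1 : ℝ) 1, s ≠ 0 → u s < 1)
    (hb1 : u (-1) = 0) (hb2 : u 1 = 0)
    (hrange : ∀ s ∈ Set.Icc (-1 : ℝ) 1, 0 ≤ u s ∧ u s ≤ 1)
    (h0 : u 0 = 1) :
    deriv (deriv u) 0 = -lam / 3 :=
  stmt3_general lam u hu heq hlt h0
end

section
/- Let v, z ∈ C²([−1,1]) ∩ C⁰([−1,1]) with v(±1) = z(±1) = 0, −v'' = λ√(1−2v) and −z'' = 6√(1−2z) on (−1,1), where 0 ≤ 2v, 2z ≤ 1 and λ ≥ 6. Then z(s) ≤ v(s) for all s ∈ [−1,1]. -/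
/-!
Put `w = z - v`. Wherever `z > v` the two equations give
`w'' = λ √(1 - 2v) - 6 √(1 - 2z) ≥ 0`, since `λ ≥ 6` and `t ↦ √(1 - 2t)` is antitone. Every
`s ∈ [-1, 1]` lies in an interval `[a', b']` with `w a', w b' ≤ 0` and `w > 0` inside (take `a'`, `b'`
the nearest points to `s` where `w ≤ 0`). There `w` is convex, so `w s ≤ max (w a') (w b') ≤ 0`.
-/

open Set

section MaximumPrinciple

variable {w : ℝ → ℝ} {a b : ℝ}

lemma exists_Icc_nonpos_ends_pos_inside (hw : ContinuousOn w (Icc a b)) (ha : w a ≤ 0)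
    (hb : w b ≤ 0) {s : ℝ} (hs : s ∈ Icc a b) :
    ∃ a' b', a ≤ a' ∧ a' ≤ s ∧ s ≤ b' ∧ b' ≤ b ∧ w a' ≤ 0 ∧ w b' ≤ 0 ∧
      ∀ t ∈ Ioo a' b', 0 < w t := by
  set A := Icc a s ∩ w ⁻¹' Iic 0
  set B := Icc s b ∩ w ⁻¹' Iic 0
  have hA : IsCompact A := isCompact_Icc.of_isClosed_subset
    ((hw.mono (Icc_subset_Icc_right hs.2)).preimage_isClosed_of_isClosed isClosed_Icc isClosed_Iic)
    inter_subset_left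
  have hB : IsCompact B := isCompact_Icc.of_isClosed_subset
    ((hw.mono (Icc_subset_Icc_left hs.1)).preimage_isClosed_of_isClosed isClosed_Icc isClosed_Iic)
    inter_subset_left
  obtain ⟨⟨haa', ha's⟩, ha'⟩ : sSup A ∈ A := hA.sSup_mem ⟨a, ⟨le_rfl, hs.1⟩, ha⟩
  obtain ⟨⟨hsb', hb'b⟩, hb'⟩ : sInf B ∈ B := hB.sInf_mem ⟨b, ⟨hs.2, le_rfl⟩, hb⟩
  refine ⟨sSup A, sInf B, haa', ha's, hsb', hb'b, ha', hb', fun t ht => ?_⟩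
  by_contra! hwt
  rcases le_or_gt t s with hts | hst
  · exact ht.1.not_ge (le_csSup hA.bddAbove ⟨⟨haa'.trans ht.1.le, hts⟩, hwt⟩)
  · exact ht.2.not_ge (csInf_le hB.bddBelow ⟨⟨hst.le, ht.2.le.trans hb'b⟩, hwt⟩)

lemma nonpos_on_Icc_of_deriv2_nonneg_of_pos (hw : ContinuousOn w (Icc a b))
    (hw' : DifferentiableOn ℝ w (Ioo a b)) (hw'' : DifferentiableOn ℝ (deriv w) (Ioo a b))
    (ha : w a ≤ 0) (hb : w b ≤ 0) (h : ∀ t ∈ Ioo a b, 0 < w t → 0 ≤ deriv^[2] w t) :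
    ∀ s ∈ Icc a b, w s ≤ 0 := by
  intro s hs
  obtain ⟨a', b', haa', has, hsb, hbb', ha', hb', hpos⟩ :=
    exists_Icc_nonpos_ends_pos_inside hw ha hb hs
  have hIcc : Icc a' b' ⊆ Icc a b := Icc_subset_Icc haa' hbb'
  have hIoo : Ioo a' b' ⊆ Ioo a b := Ioo_subset_Ioo haa' hbb'
  have hconv : ConvexOn ℝ (Icc a' b') w := by
    refine convexOn_of_deriv2_nonneg (convex_Icc a' b') (hw.mono hIcc) ?_ ?_ ?_ <;>
      rw [interior_Icc]
    · exact hw'.mono hIoo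
    · exact hw''.mono hIoo
    · exact fun t ht => h t (hIoo ht) (hpos t ht)
  have hab' : a' ≤ b' := has.trans hsb
  calc w s ≤ max (w a') (w b') :=
        hconv.le_on_segment (left_mem_Icc.2 hab') (right_mem_Icc.2 hab')
          (by rw [segment_eq_Icc hab']; exact ⟨has, hsb⟩)
    _ ≤ 0 := max_le ha' hb'

end MaximumPrinciple

lemma mul_sqrt_one_sub_two_mul_le_mul_sqrt {c lam x y : ℝ} (hc : 0 ≤ c) (hlam : c ≤ lam)
    (hxy : x ≤ y) : c * √(1 - 2 * y) ≤ lam * √(1 - 2 * x) :=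
  calc c * √(1 - 2 * y) ≤ c * √(1 - 2 * x) := by gcongr
    _ ≤ lam * √(1 - 2 * x) := by gcongr

lemma iterate_deriv_two_sub {f g : ℝ → ℝ} (hf : ContDiff ℝ 2 f) (hg : ContDiff ℝ 2 g) (t : ℝ) :
    deriv^[2] (f - g) t = deriv (deriv f) t - deriv (deriv g) t := by
  simpa [iteratedDeriv_eq_iterate] using iteratedDeriv_sub hf.contDiffAt hg.contDiffAt (x := t)

theorem stmt4_general (lam : ℝ) (hlam : 6 ≤ lam) (v z : ℝ → ℝ)
    (hv : ContDiff ℝ 2 v) (hz : ContDiff ℝ 2 z)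
    (hvb1 : v (-1) = 0) (hvb2 : v 1 = 0) (hzb1 : z (-1) = 0) (hzb2 : z 1 = 0)
    (hveq : ∀ s ∈ Set.Ioo (-1 : ℝ) 1, -(deriv (deriv v) s) = lam * Real.sqrt (1 - 2 * v s))
    (hzeq : ∀ s ∈ Set.Ioo (-1 : ℝ) 1, -(deriv (deriv z) s) = 6 * Real.sqrt (1 - 2 * z s)) :
    ∀ s ∈ Set.Icc (-1 : ℝ) 1, z s ≤ v s := by
  have hw : ContDiff ℝ 2 (z - v) := hz.sub hv
  intro s hs
  refine sub_nonpos.1 <| nonpos_on_Icc_of_deriv2_nonneg_of_pos hw.continuous.continuousOn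
    (hw.differentiable two_ne_zero).differentiableOn hw.differentiable_deriv_two.differentiableOn
    (by simp [hzb1, hvb1]) (by simp [hzb2, hvb2]) (fun t ht hpos => ?_) s hs
  have := mul_sqrt_one_sub_two_mul_le_mul_sqrt (by norm_num) hlam (sub_pos.1 hpos).le
  rw [iterate_deriv_two_sub hz hv]
  linarith [hveq t ht, hzeq t ht]

theorem stmt4 (lam : ℝ) (hlam : 6 ≤ lam) (v z : ℝ → ℝ)
    (hv : ContDiff ℝ 2 v) (hz : ContDiff ℝ 2 z)
    (hvb1 : v (-1) = 0) (hvb2 : v 1 = 0) (hzb1 : z (-1) = 0) (hzb2 : z 1 = 0)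
    (hveq : ∀ s ∈ Set.Ioo (-1 : ℝ) 1, -(deriv (deriv v) s) = lam * Real.sqrt (1 - 2 * v s))
    (hzeq : ∀ s ∈ Set.Ioo (-1 : ℝ) 1, -(deriv (deriv z) s) = 6 * Real.sqrt (1 - 2 * z s))
    (hvr : ∀ s ∈ Set.Icc (-1 : ℝ) 1, 0 ≤ 2 * v s ∧ 2 * v s ≤ 1)
    (hzr : ∀ s ∈ Set.Icc (-1 : ℝ) 1, 0 ≤ 2 * z s ∧ 2 * z s ≤ 1) :
    ∀ s ∈ Set.Icc (-1 : ℝ) 1, z s ≤ v s :=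
  stmt4_general lam hlam v z hv hz hvb1 hvb2 hzb1 hzb2 hveq hzeq
end

section
/- Let h : [0,σ) → [0,∞) be continuous, increasing, with ∫₀^σ h(t)dt = +∞. Define H(s) = ∫₀ˢ h(t)dt, ψ(s) = ∫₀ˢ e^{−H(t)}dt, L = ψ(σ) (finite), and g(s) = e^{−H(ψ⁻¹(s))} for s ∈ [0,L). Then g(0) = 1, g is decreasing, g'(s) = −h(ψ⁻¹(s)) for s ∈ (0,L), and lim_{s→L⁻} g(s) = 0. -/
open Filter Topology

/-!
Since `h ≥ 0`, `H` is increasing with `H' = h`, so `ψ`, a primitive of `e^{-H} ∈ (0, 1]`, is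
strictly increasing on `[0, σ]`. Its right inverse `ψ⁻¹` is then monotone, continuous on `(0, L)`
and tends to `σ` as `s → L⁻`; by the inverse function rule `(ψ⁻¹)' = e^{H ∘ ψ⁻¹}`, and the chain
rule gives `g' = -e^{-H(ψ⁻¹)} · h(ψ⁻¹) · e^{H(ψ⁻¹)} = -h ∘ ψ⁻¹`. Finally `H → ∞` at `σ⁻` forces
`g → 0` at `L⁻`.
-/

open Set MeasureTheory Real

section Primitive

variable {E : Type*} [NormedAddCommGroup E] {f : ℝ → E}

theorem ContinuousOn.intervalIntegrable_of_mem_ordConnected {s : Set ℝ} [s.OrdConnected]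
    (hf : ContinuousOn f s) {x y : ℝ} (hx : x ∈ s) (hy : y ∈ s) :
    IntervalIntegrable f volume x y :=
  (hf.mono (Set.OrdConnected.uIcc_subset ‹_› hx hy)).intervalIntegrable

theorem intervalIntegrable_of_continuousOn_Ioo_of_bound {a b M : ℝ} (hab : a ≤ b)
    (hf : ContinuousOn f (Ioo a b)) (hM : ∀ x ∈ Ioo a b, ‖f x‖ ≤ M) :
    IntervalIntegrable f volume a b := by
  rw [intervalIntegrable_iff_integrableOn_Ioo_of_le hab]
  exact IntegrableOn.of_bound measure_Ioo_lt_top (hf.aestronglyMeasurable measurableSet_Ioo) M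
    (ae_restrict_of_forall_mem measurableSet_Ioo hM)

theorem ContinuousOn.hasDerivAt_integral_of_mem_Ioo [NormedSpace ℝ E] [CompleteSpace E]
    {a b x : ℝ} (hint : IntervalIntegrable f volume a x) (hf : ContinuousOn f (Ioo a b))
    (hx : x ∈ Ioo a b) : HasDerivAt (fun u => ∫ t in a..u, f t) (f x) x :=
  intervalIntegral.integral_hasDerivAt_right hint (hf.stronglyMeasurableAtFilter isOpen_Ioo x hx)
    (hf.continuousAt (Ioo_mem_nhds hx.1 hx.2))

end Primitive

section RealPrimitive

variable {f : ℝ → ℝ}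

theorem monotoneOn_integral_of_nonneg {s : Set ℝ} [s.OrdConnected] {a : ℝ} (ha : a ∈ s)
    (hf : ContinuousOn f s) (hf₀ : ∀ t ∈ s, 0 ≤ f t) :
    MonotoneOn (fun x => ∫ t in a..x, f t) s := by
  intro x hx y hy hxy
  rw [← sub_nonneg, intervalIntegral.integral_interval_sub_left
    (hf.intervalIntegrable_of_mem_ordConnected ha hy)
    (hf.intervalIntegrable_of_mem_ordConnected ha hx)]
  exact intervalIntegral.integral_nonneg hxy fun t ht => hf₀ t (Set.OrdConnected.out ‹_› hx hy ht)

theorem strictMonoOn_integral_of_pos {a b : ℝ} (hf : IntervalIntegrable f volume a b)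
    (hpos : ∀ x, 0 < f x) : StrictMonoOn (fun x => ∫ t in a..x, f t) (Icc a b) := by
  intro x hx y hy hxy
  have hsub : ∀ {z}, z ∈ Icc a b → IntervalIntegrable f volume a z := fun hz =>
    hf.mono_set (uIcc_subset_uIcc_left (Icc_subset_uIcc hz))
  rw [← sub_pos, intervalIntegral.integral_interval_sub_left (hsub hy) (hsub hx)]
  exact intervalIntegral.intervalIntegral_pos_of_pos ((hsub hx).symm.trans (hsub hy)) hpos hxy

theorem intervalIntegrable_exp_neg_of_nonneg {a b : ℝ} (hab : a ≤ b)
    (hf : ContinuousOn f (Ioo a b)) (hf₀ : ∀ x ∈ Ioo a b, 0 ≤ f x) :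
    IntervalIntegrable (fun t => exp (-f t)) volume a b :=
  intervalIntegrable_of_continuousOn_Ioo_of_bound hab hf.neg.rexp fun x hx => by
    rw [norm_of_nonneg (exp_pos _).le, exp_le_one_iff, neg_nonpos]
    exact hf₀ x hx

theorem strictMonoOn_integral_exp_neg {a b : ℝ} (hab : a ≤ b) (hf : ContinuousOn f (Ioo a b))
    (hf₀ : ∀ x ∈ Ioo a b, 0 ≤ f x) :
    StrictMonoOn (fun x => ∫ t in a..x, exp (-f t)) (Icc a b) :=
  strictMonoOn_integral_of_pos (intervalIntegrable_exp_neg_of_nonneg hab hf hf₀)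
    fun _ => exp_pos _

theorem hasDerivAt_integral_exp_neg {a b x : ℝ} (hf : ContinuousOn f (Ioo a b))
    (hf₀ : ∀ x ∈ Ioo a b, 0 ≤ f x) (hx : x ∈ Ioo a b) :
    HasDerivAt (fun x => ∫ t in a..x, exp (-f t)) (exp (-f x)) x :=
  hf.neg.rexp.hasDerivAt_integral_of_mem_Ioo
    ((intervalIntegrable_exp_neg_of_nonneg (hx.1.trans hx.2).le hf hf₀).mono_set
      (uIcc_subset_uIcc_left (Icc_subset_uIcc (Ioo_subset_Icc_self hx)))) hx

end RealPrimitive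

section RightInverse

variable {α β : Type*} [LinearOrder α] [LinearOrder β] {f : α → β} {g : β → α} {a b : α}

theorem Set.MapsTo.Ioo_of_rightInvOn (hmaps : MapsTo g (Ico (f a) (f b)) (Ico a b))
    (hinv : RightInvOn g f (Ico (f a) (f b))) : MapsTo g (Ioo (f a) (f b)) (Ioo a b) := by
  intro y hy
  have hy' : y ∈ Ico (f a) (f b) := Ioo_subset_Ico_self hy
  refine ⟨lt_of_le_of_ne (hmaps hy').1 fun hga => ?_, (hmaps hy').2⟩
  exact hy.1.ne (by rw [← hinv hy', ← hga])

namespace StrictMonoOn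

theorem monotoneOn_of_rightInvOn (hf : StrictMonoOn f (Icc a b))
    (hmaps : MapsTo g (Ico (f a) (f b)) (Ico a b)) (hinv : RightInvOn g f (Ico (f a) (f b))) :
    MonotoneOn g (Ico (f a) (f b)) := by
  intro x hx y hy hxy
  rw [← hf.le_iff_le (Ico_subset_Icc_self (hmaps hx)) (Ico_subset_Icc_self (hmaps hy)),
    hinv hx, hinv hy]
  exact hxy

theorem rightInvOn_apply_left (hf : StrictMonoOn f (Icc a b))
    (hmaps : MapsTo g (Ico (f a) (f b)) (Ico a b)) (hinv : RightInvOn g f (Ico (f a) (f b)))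
    (hab : a < b) : g (f a) = a := by
  have hfa : f a ∈ Ico (f a) (f b) :=
    ⟨le_rfl, hf (left_mem_Icc.2 hab.le) (right_mem_Icc.2 hab.le) hab⟩
  exact hf.injOn (Ico_subset_Icc_self (hmaps hfa)) (left_mem_Icc.2 hab.le) (hinv hfa)

theorem image_Ico_of_rightInvOn (hf : StrictMonoOn f (Icc a b))
    (hmaps : MapsTo g (Ico (f a) (f b)) (Ico a b)) (hinv : RightInvOn g f (Ico (f a) (f b))) :
    g '' Ico (f a) (f b) = Ico a b := by
  refine (mapsTo_iff_image_subset.1 hmaps).antisymm fun x hx => ?_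
  have hab : a < b := hx.1.trans_lt hx.2
  have hfx : f x ∈ Ico (f a) (f b) :=
    ⟨hf.monotoneOn (left_mem_Icc.2 hab.le) (Ico_subset_Icc_self hx) hx.1,
      hf (Ico_subset_Icc_self hx) (right_mem_Icc.2 hab.le) hx.2⟩
  exact ⟨f x, hfx, hf.injOn (Ico_subset_Icc_self (hmaps hfx)) (Ico_subset_Icc_self hx) (hinv hfx)⟩

variable [TopologicalSpace α] [OrderTopology α] [TopologicalSpace β] [OrderTopology β]

theorem continuousAt_of_rightInvOn [DenselyOrdered α] (hf : StrictMonoOn f (Icc a b))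
    (hmaps : MapsTo g (Ico (f a) (f b)) (Ico a b)) (hinv : RightInvOn g f (Ico (f a) (f b)))
    {y : β} (hy : y ∈ Ioo (f a) (f b)) : ContinuousAt g y := by
  have hgy := hmaps.Ioo_of_rightInvOn hinv hy
  refine continuousAt_of_monotoneOn_of_image_mem_nhds (hf.monotoneOn_of_rightInvOn hmaps hinv)
    (Ico_mem_nhds hy.1 hy.2) ?_
  rw [hf.image_Ico_of_rightInvOn hmaps hinv]
  exact Ico_mem_nhds hgy.1 hgy.2

theorem tendsto_nhdsLT_of_rightInvOn (hf : StrictMonoOn f (Icc a b))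
    (hmaps : MapsTo g (Ico (f a) (f b)) (Ico a b)) (hinv : RightInvOn g f (Ico (f a) (f b)))
    (hab : a < b) : Tendsto g (𝓝[<] (f b)) (𝓝[<] b) := by
  refine (nhdsLT_basis_of_exists_lt ⟨a, hab⟩).tendsto_right_iff.2 fun c hc => ?_
  set c' := max a c
  have hc' : c' ∈ Icc a b := ⟨le_max_left a c, max_le hab.le hc.le⟩
  have hb : b ∈ Icc a b := right_mem_Icc.2 hab.le
  filter_upwards [Ioo_mem_nhdsLT (hf hc' hb (max_lt hab hc))] with y hy
  have hy' : y ∈ Ico (f a) (f b) :=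
    ⟨(hf.monotoneOn (left_mem_Icc.2 hab.le) hc' (le_max_left a c)).trans hy.1.le, hy.2⟩
  have hgy := hmaps hy'
  refine ⟨(le_max_right a c).trans_lt ?_, hgy.2⟩
  rw [← hf.lt_iff_lt hc' (Ico_subset_Icc_self hgy), hinv hy']
  exact hy.1

end StrictMonoOn

end RightInverse

theorem hasDerivAt_exp_neg_comp_of_rightInverse {F ψ ψinv : ℝ → ℝ} {F' s : ℝ}
    (hF : HasDerivAt F F' (ψinv s)) (hψ : HasDerivAt ψ (exp (-F (ψinv s))) (ψinv s))
    (hcont : ContinuousAt ψinv s) (hinv : ∀ᶠ y in 𝓝 s, ψ (ψinv y) = y) :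
    HasDerivAt (fun y => exp (-F (ψinv y))) (-F') s := by
  have hψinv := hψ.of_local_left_inverse hcont (exp_pos _).ne' hinv
  refine (hF.comp s hψinv).neg.exp.congr_deriv ?_
  simp only [Function.comp_apply, Pi.neg_apply]
  field_simp

theorem stmt6_general (σ : ℝ) (hσ : 0 < σ) (h : ℝ → ℝ)
    (hcont : ContinuousOn h (Set.Ico 0 σ))
    (hnonneg : ∀ t ∈ Set.Ico 0 σ, 0 ≤ h t)
    (H : ℝ → ℝ) (hH : ∀ s, H s = ∫ t in (0:ℝ)..s, h t)
    (hHinf : Tendsto H (𝓝[<] σ) atTop)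
    (ψ : ℝ → ℝ) (hψ : ∀ s, ψ s = ∫ t in (0:ℝ)..s, Real.exp (-H t))
    (L : ℝ) (hL : L = ψ σ)
    (ψinv : ℝ → ℝ)
    (hinv : ∀ s ∈ Set.Ico 0 L, ψinv s ∈ Set.Ico 0 σ ∧ ψ (ψinv s) = s)
    (g : ℝ → ℝ) (hg : ∀ s, g s = Real.exp (-H (ψinv s))) :
    g 0 = 1 ∧ AntitoneOn g (Set.Ico 0 L) ∧
      (∀ s ∈ Set.Ioo 0 L, HasDerivAt g (-(h (ψinv s))) s) ∧
      Tendsto g (𝓝[<] L) (𝓝 0) := by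
  obtain rfl : g = fun s => exp (-H (ψinv s)) := funext hg
  subst hL
  have hHderiv : ∀ x ∈ Ioo 0 σ, HasDerivAt H (h x) x := fun x hx => funext hH ▸
    (hcont.mono Ioo_subset_Ico_self).hasDerivAt_integral_of_mem_Ioo
      (hcont.intervalIntegrable_of_mem_ordConnected ⟨le_rfl, hσ⟩ (Ioo_subset_Ico_self hx)) hx
  have hHcont : ContinuousOn H (Ioo 0 σ) := fun x hx =>
    (hHderiv x hx).continuousAt.continuousWithinAt
  have hHnonneg : ∀ x ∈ Ioo 0 σ, 0 ≤ H x := fun x hx => (hH x).symm ▸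
    intervalIntegral.integral_nonneg hx.1.le fun t ht => hnonneg t ⟨ht.1, ht.2.trans_lt hx.2⟩
  have hHmono : MonotoneOn H (Ico 0 σ) :=
    funext hH ▸ monotoneOn_integral_of_nonneg ⟨le_rfl, hσ⟩ hcont hnonneg
  have hψmono : StrictMonoOn ψ (Icc 0 σ) :=
    funext hψ ▸ strictMonoOn_integral_exp_neg hσ.le hHcont hHnonneg
  have hψ0 : ψ 0 = 0 := by simp [hψ]
  rw [show Ico 0 (ψ σ) = Ico (ψ 0) (ψ σ) by rw [hψ0]] at hinv ⊢
  rw [show Ioo 0 (ψ σ) = Ioo (ψ 0) (ψ σ) by rw [hψ0]]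
  have hmaps : MapsTo ψinv (Ico (ψ 0) (ψ σ)) (Ico 0 σ) := fun s hs => (hinv s hs).1
  have hright : RightInvOn ψinv ψ (Ico (ψ 0) (ψ σ)) := fun s hs => (hinv s hs).2
  have hinv0 := hψmono.rightInvOn_apply_left hmaps hright hσ
  rw [hψ0] at hinv0
  refine ⟨by simp [hinv0, hH], fun s hs t ht hst => ?_, fun s hs => ?_, ?_⟩
  · exact exp_le_exp.2 (neg_le_neg (hHmono (hmaps hs) (hmaps ht)
      (hψmono.monotoneOn_of_rightInvOn hmaps hright hs ht hst)))
  · have hx := hmaps.Ioo_of_rightInvOn hright hs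
    exact hasDerivAt_exp_neg_comp_of_rightInverse (hHderiv _ hx)
      (funext hψ ▸ hasDerivAt_integral_exp_neg hHcont hHnonneg hx)
      (hψmono.continuousAt_of_rightInvOn hmaps hright hs)
      (eventually_of_mem (Ioo_mem_nhds hs.1 hs.2) fun y hy => hright (Ioo_subset_Ico_self hy))
  · exact tendsto_exp_atBot.comp (tendsto_neg_atTop_atBot.comp
      (hHinf.comp (hψmono.tendsto_nhdsLT_of_rightInvOn hmaps hright hσ)))

theorem stmt6 (σ : ℝ) (hσ : 0 < σ) (h : ℝ → ℝ)
    (hcont : ContinuousOn h (Set.Ico 0 σ)) (hmono : MonotoneOn h (Set.Ico 0 σ))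
    (hnonneg : ∀ t ∈ Set.Ico 0 σ, 0 ≤ h t)
    (hblow : Tendsto h (𝓝[<] σ) atTop)
    (H : ℝ → ℝ) (hH : ∀ s, H s = ∫ t in (0:ℝ)..s, h t)
    (hHinf : Tendsto H (𝓝[<] σ) atTop)
    (ψ : ℝ → ℝ) (hψ : ∀ s, ψ s = ∫ t in (0:ℝ)..s, Real.exp (-H t))
    (L : ℝ) (hL : L = ψ σ)
    (ψinv : ℝ → ℝ)
    (hinv : ∀ s ∈ Set.Ico 0 L, ψinv s ∈ Set.Ico 0 σ ∧ ψ (ψinv s) = s)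
    (g : ℝ → ℝ) (hg : ∀ s, g s = Real.exp (-H (ψinv s))) :
    g 0 = 1 ∧ AntitoneOn g (Set.Ico 0 L) ∧
      (∀ s ∈ Set.Ioo 0 L, HasDerivAt g (-(h (ψinv s))) s) ∧
      Tendsto g (𝓝[<] L) (𝓝 0) :=
  stmt6_general σ hσ h hcont hnonneg H hH hHinf ψ hψ L hL ψinv hinv g hg
end

section
/- If lim_{s→σ⁻}(σ−s)^γ h(s) = C > 0 with 1 ≤ γ < 2, then ∫₀^σ √(h(t)) dt < +∞, and the integral ∫₀^σ e^{−H(t)} / √(∫ₜ^σ e^{−2H(s)}ds) dt is finite, where H(s) = ∫₀ˢ h(t)dt. -/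
/-!
Near `σ` the limit hypothesis gives `h s ≤ 2C (σ - s)^(-γ)`, so `√h = O((σ - s)^(-γ/2))`, which is
integrable because `γ/2 < 1`. For the second integrand put `d = σ - t` and `δ = c d^γ` with a
small constant `c`; as `γ ≥ 1`, `δ ≤ d/2` for small `d`, and monotonicity of `h` gives
`H (t + δ) - H t ≤ δ h (t + δ) ≤ 1`. Hence `∫ t..σ, exp (-2H) ≥ δ exp (-2 H t - 2)`, and the
integrand is at most `e / √δ = O(d^(-γ/2))` as well.
-/

open Filter Topology MeasureTheory Set Real

theorem ContinuousOn.intervalIntegrable_of_ordConnected {f : ℝ → ℝ} {s : Set ℝ} {x y : ℝ}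
    [s.OrdConnected] (hf : ContinuousOn f s) (hx : x ∈ s) (hy : y ∈ s) :
    IntervalIntegrable f volume x y :=
  (hf.mono (Set.OrdConnected.uIcc_subset ‹_› hx hy)).intervalIntegrable

theorem sqrt_rpow_eq_rpow_div_two {x : ℝ} (hx : 0 ≤ x) (p : ℝ) : √(x ^ p) = x ^ (p / 2) := by
  rw [sqrt_eq_rpow, ← rpow_mul hx]
  ring_nf

theorem sqrt_le_sqrt_mul_rpow {x y K γ : ℝ} (hx : 0 ≤ x) (hy : y ≤ K * x ^ (-γ)) :
    √y ≤ √K * x ^ (-γ / 2) :=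
  (sqrt_le_sqrt hy).trans_eq <| by
    rw [sqrt_mul' _ (rpow_nonneg hx _), sqrt_rpow_eq_rpow_div_two hx]

theorem eventually_le_mul_rpow_neg_of_tendsto {h : ℝ → ℝ} {σ γ C K : ℝ} (hCK : C < K)
    (hlim : Tendsto (fun s => (σ - s) ^ γ * h s) (𝓝[<] σ) (𝓝 C)) :
    ∀ᶠ s in 𝓝[<] σ, h s ≤ K * (σ - s) ^ (-γ) := by
  filter_upwards [hlim.eventually_lt_const hCK, self_mem_nhdsWithin] with s hs (hsσ : s < σ)
  have hpos : 0 < (σ - s) ^ γ := rpow_pos_of_pos (sub_pos.2 hsσ) γ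
  rw [rpow_neg (sub_pos.2 hsσ).le, ← div_eq_mul_inv, le_div_iff₀ hpos]
  linarith

theorem integrableOn_Ioo_sub_rpow_neg {b c p : ℝ} (hp : p < 1) :
    IntegrableOn (fun s => (b - s) ^ (-p)) (Ioo c b) := by
  rcases le_or_gt b c with hbc | hcb
  · simp [Ioo_eq_empty_of_le hbc]
  have h := ((intervalIntegral.intervalIntegrable_rpow' (a := 0) (b := b - c)
    (r := -p) (by linarith)).comp_sub_left b).symm
  simp only [sub_zero, sub_sub_cancel] at h
  exact ((intervalIntegrable_iff_integrableOn_Ioc_of_le hcb.le).1 h).mono_set Ioo_subset_Ioc_self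

theorem integrableOn_Ioo_of_eventually_norm_le_rpow {f : ℝ → ℝ} {a b K p : ℝ} (hp : p < 1)
    (hf : ContinuousOn f (Ico a b)) (hle : ∀ᶠ s in 𝓝[<] b, ‖f s‖ ≤ K * (b - s) ^ (-p)) :
    IntegrableOn f (Ioo a b) := by
  obtain ⟨l, hlb, hl⟩ := mem_nhdsLT_iff_exists_Ioo_subset.1 hle
  rcases le_or_gt b a with hba | hab
  · simp [Ioo_eq_empty_of_le hba]
  set m := max a l
  have hmb : m < b := max_lt hab hlb
  have hnear : IntegrableOn f (Ioo m b) := by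
    refine Integrable.mono' ((integrableOn_Ioo_sub_rpow_neg hp).const_mul K)
      ((hf.mono fun s hs => ⟨(le_max_left a l).trans hs.1.le, hs.2⟩).aestronglyMeasurable
        measurableSet_Ioo) ((ae_restrict_iff' measurableSet_Ioo).2 (ae_of_all _ fun s hs => ?_))
    exact hl ⟨(le_max_right a l).trans_lt hs.1, hs.2⟩
  have hfar : IntegrableOn f (Icc a m) :=
    (hf.mono fun s hs => ⟨hs.1, hs.2.trans_lt hmb⟩).integrableOn_Icc
  refine (hfar.union hnear).mono_set fun s hs => ?_
  rcases le_or_gt s m with hsm | hms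
  exacts [Or.inl ⟨hs.1.le, hsm⟩, Or.inr ⟨hms, hs.2⟩]

section Primitive

variable {h : ℝ → ℝ} {a σ : ℝ}

theorem primitive_sub_primitive (hcont : ContinuousOn h (Ico a σ)) {x y : ℝ} (hx : x ∈ Ico a σ)
    (hy : y ∈ Ico a σ) : (∫ t in a..y, h t) - ∫ t in a..x, h t = ∫ t in x..y, h t :=
  have ha : a ∈ Ico a σ := left_mem_Ico.2 (hx.1.trans_lt hx.2)
  intervalIntegral.integral_interval_sub_left (hcont.intervalIntegrable_of_ordConnected ha hy)
    (hcont.intervalIntegrable_of_ordConnected ha hx)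

theorem monotoneOn_primitive_Ico (hcont : ContinuousOn h (Ico a σ))
    (hnonneg : ∀ t ∈ Ico a σ, 0 ≤ h t) : MonotoneOn (fun s => ∫ t in a..s, h t) (Ico a σ) :=
  fun x hx y hy hxy => sub_nonneg.1 <| by
    rw [primitive_sub_primitive hcont hx hy]
    exact intervalIntegral.integral_nonneg hxy fun t ht =>
      hnonneg t ⟨hx.1.trans ht.1, ht.2.trans_lt hy.2⟩

theorem continuousOn_primitive_Ico (hcont : ContinuousOn h (Ico a σ)) :
    ContinuousOn (fun s => ∫ t in a..s, h t) (Ico a σ) := by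
  refine continuousOn_of_locally_continuousOn fun x hx => ⟨Iio ((x + σ) / 2), isOpen_Iio,
    show x < (x + σ) / 2 by linarith [hx.2], ?_⟩
  have hau : a ≤ (x + σ) / 2 := by linarith [hx.1, hx.2]
  have hint : IntegrableOn h (uIcc a ((x + σ) / 2)) := by
    rw [uIcc_of_le hau]
    exact (hcont.mono fun t ht => ⟨ht.1, by linarith [ht.2, hx.2]⟩).integrableOn_Icc
  have hprim := intervalIntegral.continuousOn_primitive_interval hint
  rw [uIcc_of_le hau] at hprim
  exact hprim.mono fun t ht => ⟨ht.1.1, ht.2.le⟩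

end Primitive

section Tail

variable {Φ : ℝ → ℝ} {a σ : ℝ}

theorem integrableOn_exp_neg_two_mul (haσ : a < σ) (hc : ContinuousOn Φ (Ico a σ))
    (hm : MonotoneOn Φ (Ico a σ)) : IntegrableOn (fun s => exp (-2 * Φ s)) (Icc a σ) := by
  rw [integrableOn_Icc_iff_integrableOn_Ico]
  refine Integrable.mono' (integrableOn_const (C := exp (-2 * Φ a)) (by simp))
    ((continuous_exp.comp_continuousOn (continuousOn_const.mul hc)).aestronglyMeasurable
      measurableSet_Ico) ((ae_restrict_iff' measurableSet_Ico).2 (ae_of_all _ fun s hs => ?_))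
  rw [norm_of_nonneg (exp_pos _).le, exp_le_exp]
  linarith [hm (left_mem_Ico.2 haσ) hs hs.1]

theorem continuousOn_exp_neg_div_sqrt_integral (hc : ContinuousOn Φ (Ico a σ))
    (hint : IntegrableOn (fun s => exp (-2 * Φ s)) (Icc a σ)) :
    ContinuousOn (fun t => exp (-Φ t) / √(∫ s in t..σ, exp (-2 * Φ s))) (Ico a σ) := by
  have hG : ContinuousOn (fun t => ∫ s in t..σ, exp (-2 * Φ s)) (Ico a σ) := by
    rcases le_or_gt σ a with hσa | haσ
    · simp [Ico_eq_empty_of_le hσa]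
    rw [← uIcc_of_le haσ.le] at hint
    exact (intervalIntegral.continuousOn_primitive_interval_left hint).mono
      (uIcc_of_le haσ.le ▸ Ico_subset_Icc_self)
  refine (continuous_exp.comp_continuousOn hc.neg).div (continuous_sqrt.comp_continuousOn hG)
    fun t ht => (sqrt_pos.2 ?_).ne'
  refine intervalIntegral.intervalIntegral_pos_of_pos_on ?_ (fun _ _ => exp_pos _) ht.2
  exact (hint.mono_set (uIcc_of_le ht.2.le ▸ Icc_subset_Icc_left ht.1)).intervalIntegrable

theorem integral_le_mul_of_monotoneOn {h : ℝ → ℝ} {t u : ℝ} (htu : t ≤ u)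
    (hmono : MonotoneOn h (Icc t u)) : ∫ s in t..u, h s ≤ (u - t) * h u := by
  calc ∫ s in t..u, h s ≤ ∫ _ in t..u, h u :=
        intervalIntegral.integral_mono_on htu
          (MonotoneOn.intervalIntegrable (by rwa [uIcc_of_le htu])) intervalIntegrable_const
          fun s hs => hmono hs (right_mem_Icc.2 htu) hs.2
    _ = (u - t) * h u := by simp

theorem mul_le_integral_of_le_on {E : ℝ → ℝ} {t u m : ℝ} (htu : t ≤ u) (huσ : u ≤ σ)
    (hint : IntegrableOn E (Icc t σ)) (hnonneg : ∀ s ∈ Icc t σ, 0 ≤ E s)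
    (hm : ∀ s ∈ Icc t u, m ≤ E s) : (u - t) * m ≤ ∫ s in t..σ, E s := by
  have hii : IntervalIntegrable E volume t σ :=
    (uIcc_of_le (htu.trans huσ) ▸ hint).intervalIntegrable
  calc (u - t) * m = ∫ _ in t..u, m := by simp
    _ ≤ ∫ s in t..u, E s := intervalIntegral.integral_mono_on htu intervalIntegrable_const
        (hii.mono_set (uIcc_subset_uIcc_left (mem_uIcc_of_le htu huσ))) hm
    _ ≤ ∫ s in t..σ, E s := intervalIntegral.integral_mono_interval le_rfl htu huσ
        ((ae_restrict_iff' measurableSet_Ioc).2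
          (ae_of_all _ fun s hs => hnonneg s (Ioc_subset_Icc_self hs))) hii

theorem exp_neg_div_sqrt_integral_le {t δ : ℝ} (hδ : 0 < δ) (hδσ : t + δ ≤ σ)
    (hint : IntegrableOn (fun s => exp (-2 * Φ s)) (Icc t σ))
    (hΦ : MonotoneOn Φ (Icc t (t + δ))) (hstep : Φ (t + δ) ≤ Φ t + 1) :
    exp (-Φ t) / √(∫ s in t..σ, exp (-2 * Φ s)) ≤ exp 1 / √δ := by
  have hG : δ * exp (-2 * (Φ t + 1)) ≤ ∫ s in t..σ, exp (-2 * Φ s) := by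
    have := mul_le_integral_of_le_on (m := exp (-2 * (Φ t + 1))) (by linarith) hδσ hint
      (fun _ _ => (exp_pos _).le) fun s hs => exp_le_exp.2 <| by
        linarith [hΦ hs (right_mem_Icc.2 (by linarith)) hs.2]
    rwa [add_sub_cancel_left] at this
  have hsqrt : exp (-(Φ t + 1)) * √δ ≤ √(∫ s in t..σ, exp (-2 * Φ s)) := by
    calc exp (-(Φ t + 1)) * √δ = √(δ * exp (-2 * (Φ t + 1))) := by
          rw [sqrt_mul hδ.le, ← exp_half, mul_comm]; ring_nf
      _ ≤ _ := sqrt_le_sqrt hG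
  calc exp (-Φ t) / √(∫ s in t..σ, exp (-2 * Φ s))
      ≤ exp (-Φ t) / (exp (-(Φ t + 1)) * √δ) :=
        div_le_div_of_nonneg_left (exp_pos _).le (by positivity) hsqrt
    _ = exp 1 / √δ := by rw [div_mul_eq_div_div, ← exp_sub]; ring_nf

end Tail

theorem rpow_div_le_half {d γ K : ℝ} (hd : 0 < d) (hd1 : d ≤ 1) (hγ : 1 ≤ γ) (hK : 0 ≤ K) :
    d ^ γ / (2 ^ γ * K + 2) ≤ d / 2 := by
  have hdγ : d ^ γ ≤ d := (rpow_le_rpow_of_exponent_ge hd hd1 hγ).trans_eq (rpow_one d)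
  exact div_le_div₀ hd.le hdγ two_pos (le_add_of_nonneg_left (by positivity))

theorem rpow_div_mul_rpow_neg_le_one {d γ K : ℝ} (hd : 0 < d) (hK : 0 ≤ K) :
    d ^ γ / (2 ^ γ * K + 2) * (K * (d / 2) ^ (-γ)) ≤ 1 := by
  have hdγ : 0 < d ^ γ := rpow_pos_of_pos hd γ
  rw [rpow_neg (by positivity : (0 : ℝ) ≤ d / 2), div_rpow hd.le zero_le_two, inv_div,
    div_mul_eq_mul_div, div_le_one (by positivity), mul_left_comm, mul_div_cancel₀ _ hdγ.ne']
  linarith [mul_comm K (2 ^ γ)]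

theorem integral_le_one_of_le_mul_rpow_neg {h : ℝ → ℝ} {σ K γ t δ : ℝ} (hK : 0 ≤ K) (hγ : 0 ≤ γ)
    (htσ : t < σ) (hδ : 0 ≤ δ) (hδσ : δ ≤ (σ - t) / 2) (hmono : MonotoneOn h (Icc t (t + δ)))
    (hbound : h (t + δ) ≤ K * (σ - (t + δ)) ^ (-γ))
    (hδK : δ * (K * ((σ - t) / 2) ^ (-γ)) ≤ 1) : ∫ s in t..(t + δ), h s ≤ 1 := by
  have hfar : (σ - t) / 2 ≤ σ - (t + δ) := by linarith
  calc ∫ s in t..(t + δ), h s ≤ (t + δ - t) * h (t + δ) :=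
        integral_le_mul_of_monotoneOn (by linarith) hmono
    _ ≤ δ * (K * ((σ - t) / 2) ^ (-γ)) := by
        rw [add_sub_cancel_left]
        refine mul_le_mul_of_nonneg_left (hbound.trans (mul_le_mul_of_nonneg_left ?_ hK)) hδ
        exact rpow_le_rpow_of_nonpos (by linarith) hfar (by linarith)
    _ ≤ 1 := hδK

theorem eventually_exp_neg_primitive_div_sqrt_le {h : ℝ → ℝ} {a σ K γ : ℝ} (haσ : a < σ)
    (hK : 0 ≤ K) (hγ : 1 ≤ γ) (hcont : ContinuousOn h (Ico a σ))
    (hmono : MonotoneOn h (Ico a σ)) (hnonneg : ∀ t ∈ Ico a σ, 0 ≤ h t)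
    (hbound : ∀ᶠ s in 𝓝[<] σ, h s ≤ K * (σ - s) ^ (-γ)) :
    ∀ᶠ t in 𝓝[<] σ, exp (-∫ r in a..t, h r) / √(∫ s in t..σ, exp (-2 * ∫ r in a..s, h r))
      ≤ exp 1 * √(2 ^ γ * K + 2) * (σ - t) ^ (-γ / 2) := by
  obtain ⟨l, hlσ, hl⟩ := mem_nhdsLT_iff_exists_Ioo_subset.1 hbound
  have hΦm := monotoneOn_primitive_Ico hcont hnonneg
  have hint := integrableOn_exp_neg_two_mul haσ (continuousOn_primitive_Ico hcont) hΦm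
  filter_upwards [Ioo_mem_nhdsLT (show max (max l a) (σ - 1) < σ by
    simp only [max_lt_iff]; exact ⟨⟨hlσ, haσ⟩, by linarith⟩)] with t ht
  simp only [mem_Ioo, max_lt_iff] at ht
  obtain ⟨⟨⟨hlt, hat⟩, hσt⟩, htσ⟩ := ht
  set d := σ - t
  -- the denominator makes `δ ≤ d / 2` and `δ * (K * (d / 2) ^ (-γ)) ≤ 1`
  set δ := d ^ γ / (2 ^ γ * K + 2)
  have hd : 0 < d := sub_pos.2 htσ
  have hδ : 0 < δ := by positivity
  have hδd : δ ≤ d / 2 := rpow_div_le_half hd (by linarith) hγ hK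
  have htδ : t + δ ∈ Ico a σ := ⟨by linarith, by linarith⟩
  have hstep : ∫ r in a..(t + δ), h r ≤ (∫ r in a..t, h r) + 1 := by
    rw [← sub_le_iff_le_add', primitive_sub_primitive hcont ⟨hat.le, htσ⟩ htδ]
    exact integral_le_one_of_le_mul_rpow_neg hK (by linarith) htσ hδ.le hδd
      (hmono.mono (Icc_subset_Ico hat.le htδ.2)) (hl ⟨by linarith, htδ.2⟩)
      (rpow_div_mul_rpow_neg_le_one hd hK)
  calc _ ≤ exp 1 / √δ := exp_neg_div_sqrt_integral_le hδ (by linarith)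
        (hint.mono_set (Icc_subset_Icc_left hat.le)) (hΦm.mono (Icc_subset_Ico hat.le htδ.2)) hstep
    _ = exp 1 * √(2 ^ γ * K + 2) * d ^ (-γ / 2) := by
        rw [sqrt_div (rpow_nonneg hd.le _), sqrt_rpow_eq_rpow_div_two hd.le, neg_div,
          rpow_neg hd.le]
        field_simp

theorem stmt8 (σ C γ : ℝ) (hσ : 0 < σ) (hC : 0 < C) (hγ1 : 1 ≤ γ) (hγ2 : γ < 2)
    (h : ℝ → ℝ) (hcont : ContinuousOn h (Set.Ico 0 σ))
    (hmono : MonotoneOn h (Set.Ico 0 σ)) (hnonneg : ∀ t ∈ Set.Ico 0 σ, 0 ≤ h t)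
    (hlim : Tendsto (fun s => (σ - s) ^ γ * h s) (𝓝[<] σ) (𝓝 C))
    (H : ℝ → ℝ) (hH : ∀ s, H s = ∫ t in (0:ℝ)..s, h t) :
    IntegrableOn (fun t => Real.sqrt (h t)) (Set.Ioo 0 σ) volume ∧
    IntegrableOn
      (fun t => Real.exp (-H t) / Real.sqrt (∫ s in t..σ, Real.exp (-2 * H s)))
      (Set.Ioo 0 σ) volume := by
  obtain rfl : H = fun s => ∫ t in (0:ℝ)..s, h t := funext hH
  have hbound := eventually_le_mul_rpow_neg_of_tendsto (by linarith : C < 2 * C) hlim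
  have hp : γ / 2 < 1 := by linarith
  have hΦc := continuousOn_primitive_Ico hcont
  constructor
  · refine integrableOn_Ioo_of_eventually_norm_le_rpow (K := √(2 * C)) hp
      (continuous_sqrt.comp_continuousOn hcont) ?_
    filter_upwards [hbound, self_mem_nhdsWithin] with s hs (hsσ : s < σ)
    rw [norm_of_nonneg (sqrt_nonneg _), ← neg_div]
    exact sqrt_le_sqrt_mul_rpow (sub_nonneg.2 hsσ.le) hs
  · refine integrableOn_Ioo_of_eventually_norm_le_rpow (K := exp 1 * √(2 ^ γ * (2 * C) + 2)) hp
      (continuousOn_exp_neg_div_sqrt_integral hΦc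
        (integrableOn_exp_neg_two_mul hσ hΦc (monotoneOn_primitive_Ico hcont hnonneg))) ?_
    filter_upwards [eventually_exp_neg_primitive_div_sqrt_le hσ (by positivity) hγ1 hcont hmono
      hnonneg hbound] with t ht
    rw [norm_of_nonneg (by positivity), ← neg_div]
    exact ht
end

section
/- Let g : [0,L] → [0,1] be continuous and decreasing with g(0)=1, g(L)=0, and g(s) > 0 for s < L. If v is a C² solution on [0,∞) of −v'' = λ g(v) with v(0) = ℓ ∈ (0,L) and v'(0) = 0 (extending g by 1 for negative arguments), then v'(s) < 0 for every s > 0. -/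
theorem stmt9 (L lam ℓ : ℝ) (hL : 0 < L) (hlam : 0 < lam) (hℓ : 0 < ℓ) (hℓL : ℓ < L)
    (g : ℝ → ℝ) (hgcont : Continuous g) (hganti : Antitone g)
    (hgneg : ∀ s ≤ 0, g s = 1) (hgL : g L = 0) (hgpos : ∀ s < L, 0 < g s)
    (hgrange : ∀ s, 0 ≤ g s ∧ g s ≤ 1)
    (v v' : ℝ → ℝ)
    (hv : ∀ s, 0 ≤ s → HasDerivAt v (v' s) s)
    (hv'' : ∀ s, 0 ≤ s → HasDerivAt v' (-(lam * g (v s))) s)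
    (hv0 : v 0 = ℓ) (hv'0 : v' 0 = 0) :
    ∀ s > 0, v' s < 0 := by
  -- v' is antitone on [0,∞)
  have hcont : ContinuousOn v' (Set.Ici 0) := fun x hx =>
    ((hv'' x hx).continuousAt).continuousWithinAt
  have hanti : AntitoneOn v' (Set.Ici 0) := by
    apply antitoneOn_of_deriv_nonpos (convex_Ici 0) hcont
    · intro x hx
      rw [interior_Ici] at hx
      exact ((hv'' x hx.le).differentiableAt).differentiableWithinAt
    intro x hx
    rw [interior_Ici] at hx
    rw [(hv'' x (le_of_lt hx)).deriv]
    have := (hgrange (v x)).1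
    nlinarith
  intro s hs
  by_contra h
  push_neg at h
  have hvs0 : v' s = 0 := by
    have := hanti (Set.self_mem_Ici) (Set.mem_Ici.2 hs.le) hs.le
    rw [hv'0] at this
    linarith
  -- v' = 0 on [0,s]
  have hzero : ∀ t ∈ Set.Icc (0:ℝ) s, v' t = 0 := by
    intro t ht
    have h1 := hanti (Set.self_mem_Ici) (Set.mem_Ici.2 ht.1) ht.1
    have h2 := hanti (Set.mem_Ici.2 ht.1) (Set.mem_Ici.2 hs.le) ht.2
    rw [hv'0] at h1
    rw [hvs0] at h2
    linarith
  -- v is constant on [0,s]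
  have hvconst : ∀ t ∈ Set.Icc (0:ℝ) s, v t = ℓ := by
    intro t ht
    have := constant_of_has_deriv_right_zero (f := v) (a := 0) (b := s)
      (fun x hx => ((hv x hx.1).continuousAt).continuousWithinAt)
      (fun x hx => by
        have := (hv x hx.1).hasDerivWithinAt (s := Set.Ici x)
        rwa [hzero x ⟨hx.1, hx.2.le⟩] at this) t ht
    rwa [hv0] at this
  -- at s/2, v' is constant near, so derivative is 0
  have hmid : (0:ℝ) < s/2 := by linarith
  have hconstnear : HasDerivAt v' 0 (s/2) := by
    have hev : v' =ᶠ[nhds (s/2)] fun _ => (0:ℝ) := by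
      have : Set.Ioo (0:ℝ) s ∈ nhds (s/2) := Ioo_mem_nhds hmid (by linarith)
      filter_upwards [this] with x hx
      exact hzero x ⟨hx.1.le, hx.2.le⟩
    exact (hasDerivAt_const (s/2) (0:ℝ)).congr_of_eventuallyEq hev
  have huniq := (hv'' (s/2) hmid.le).unique hconstnear
  have hvℓ : v (s/2) = ℓ := hvconst (s/2) ⟨hmid.le, by linarith⟩
  rw [hvℓ] at huniq
  have := hgpos ℓ hℓL
  nlinarith
end

section
/- Let g and v be as in the Cauchy problem −v'' = λg(v), v(0) = ℓ ∈ (0,L), v'(0) = 0, with g continuous decreasing, g > 0 on [0,L), g ≡ 1 on (−∞,0]. Then there exists R_ℓ > 0 with v(R_ℓ) = 0, and R_ℓ = (1/√(2λ)) ∫₀^ℓ dt / √(∫ₜ^ℓ g(s)ds). -/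
/-!
Energy conservation gives `v' s ^ 2 = 2 λ ∫_{v s}^ℓ g`. Since `g ≥ 0`, `v' ≤ 0` and `v ≤ ℓ`,
so `v'' ≤ -λ g ℓ < 0`: `v` is strictly decreasing and stays below `ℓ - λ g ℓ s² / 2`, hence
hits `0` at some `R`. The change of variables `t = v s` on `[0, R]`, whose Jacobian `|v'|`
cancels the integrand exactly, turns the integral into `R`; being an identity of Lebesgue
integrals over sets, it needs no integrability of the improper integrand.
-/

open Set MeasureTheory

theorem le_of_hasDerivAt_of_deriv_le {f f' B B' : ℝ → ℝ} {a x : ℝ}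
    (hf : ∀ y, a ≤ y → HasDerivAt f (f' y) y) (hB : ∀ y, a ≤ y → HasDerivAt B (B' y) y)
    (ha : f a ≤ B a) (hle : ∀ y, a ≤ y → f' y ≤ B' y) (hx : a ≤ x) : f x ≤ B x :=
  image_le_of_deriv_right_le_deriv_boundary
    (fun y hy => (hf y hy.1).continuousAt.continuousWithinAt)
    (fun y hy => (hf y hy.1).hasDerivWithinAt) ha
    (fun y hy => (hB y hy.1).continuousAt.continuousWithinAt)
    (fun y hy => (hB y hy.1).hasDerivWithinAt) (fun y hy => hle y hy.1) ⟨hx, le_rfl⟩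

theorem integral_Icc_eq_of_abs_deriv_mul_eq_one {v v' φ : ℝ → ℝ} {a b : ℝ} (hab : a ≤ b)
    (hv : ∀ s ∈ Icc a b, HasDerivAt v (v' s) s) (hanti : StrictAntiOn v (Icc a b))
    (hφ : ∀ s ∈ Ioc a b, |v' s| * φ (v s) = 1) :
    ∫ t in Icc (v b) (v a), φ t = b - a := by
  have himage : v '' Icc a b = Icc (v b) (v a) :=
    ContinuousOn.image_Icc_of_antitoneOn hab
      (fun s hs => (hv s hs).continuousAt.continuousWithinAt) hanti.antitoneOn
  rw [← himage, integral_image_eq_integral_abs_deriv_smul measurableSet_Icc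
    (fun s hs => (hv s hs).hasDerivWithinAt) hanti.injOn, integral_Icc_eq_integral_Ioc]
  simp only [smul_eq_mul]
  rw [setIntegral_congr_fun measurableSet_Ioc (fun s hs => hφ s hs)]
  simp [hab]

structure IsCauchySolution (lam ℓ : ℝ) (g v v' : ℝ → ℝ) : Prop where
  hasDerivAt : ∀ s, 0 ≤ s → HasDerivAt v (v' s) s
  hasDerivAt_deriv : ∀ s, 0 ≤ s → HasDerivAt v' (-(lam * g (v s))) s
  init : v 0 = ℓ
  init_deriv : v' 0 = 0

namespace IsCauchySolution

variable {lam ℓ : ℝ} {g v v' : ℝ → ℝ} {s : ℝ}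

theorem sq_deriv_eq (h : IsCauchySolution lam ℓ g v v') (hg : Continuous g) (hs : 0 ≤ s) :
    v' s ^ 2 = 2 * lam * ∫ t in v s..ℓ, g t := by
  set E : ℝ → ℝ := fun x => v' x ^ 2 - 2 * lam * ∫ t in v x..ℓ, g t
  have hE : ∀ x, 0 ≤ x → HasDerivAt E 0 x := by
    intro x hx
    have hI : HasDerivAt (fun y => ∫ t in y..ℓ, g t) (-g (v x)) (v x) :=
      intervalIntegral.integral_hasDerivAt_left (hg.intervalIntegrable _ _)
        (hg.stronglyMeasurableAtFilter _ _) hg.continuousAt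
    refine (((h.hasDerivAt_deriv x hx).pow 2).sub
      ((hI.comp x (h.hasDerivAt x hx)).const_mul (2 * lam))).congr_deriv ?_
    ring
  have hconst := constant_of_has_deriv_right_zero
    (fun x hx => (hE x hx.1).continuousAt.continuousWithinAt)
    (fun x hx => (hE x hx.1).hasDerivWithinAt) s ⟨hs, le_rfl⟩
  simp only [E, h.init, h.init_deriv, intervalIntegral.integral_same] at hconst
  linarith

theorem deriv_nonpos (h : IsCauchySolution lam ℓ g v v') (hlam : 0 ≤ lam)
    (hg : ∀ x, 0 ≤ g x) (hs : 0 ≤ s) : v' s ≤ 0 :=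
  le_of_hasDerivAt_of_deriv_le h.hasDerivAt_deriv (fun y _ => hasDerivAt_const y 0)
    h.init_deriv.le (fun y _ => by simpa using mul_nonneg hlam (hg (v y))) hs

theorem le_init (h : IsCauchySolution lam ℓ g v v') (hlam : 0 ≤ lam)
    (hg : ∀ x, 0 ≤ g x) (hs : 0 ≤ s) : v s ≤ ℓ :=
  le_of_hasDerivAt_of_deriv_le h.hasDerivAt (fun y _ => hasDerivAt_const y ℓ)
    h.init.le (fun _ hy => h.deriv_nonpos hlam hg hy) hs

theorem deriv_le (h : IsCauchySolution lam ℓ g v v') (hlam : 0 ≤ lam)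
    (hg : ∀ x, 0 ≤ g x) (hganti : Antitone g) (hs : 0 ≤ s) :
    v' s ≤ -(lam * g ℓ) * s := by
  refine le_of_hasDerivAt_of_deriv_le h.hasDerivAt_deriv
    (fun y _ => (hasDerivAt_id y).const_mul _) (by simp [h.init_deriv]) (fun y hy => ?_) hs
  have := mul_le_mul_of_nonneg_left (hganti (h.le_init hlam hg hy)) hlam
  simp only [mul_one]
  linarith

theorem le_init_sub (h : IsCauchySolution lam ℓ g v v') (hlam : 0 ≤ lam)
    (hg : ∀ x, 0 ≤ g x) (hganti : Antitone g) (hs : 0 ≤ s) :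
    v s ≤ ℓ - lam * g ℓ / 2 * s ^ 2 := by
  refine le_of_hasDerivAt_of_deriv_le h.hasDerivAt
    (fun y _ => ((hasDerivAt_pow 2 y).const_mul _).const_sub ℓ) (by simp [h.init])
    (fun y hy => ?_) hs
  have := h.deriv_le hlam hg hganti hy
  simp only [Nat.cast_ofNat]
  linarith

theorem deriv_neg (h : IsCauchySolution lam ℓ g v v') (hlam : 0 < lam)
    (hg : ∀ x, 0 ≤ g x) (hganti : Antitone g) (hgℓ : 0 < g ℓ) (hs : 0 < s) : v' s < 0 := by
  have := h.deriv_le hlam.le hg hganti hs.le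
  nlinarith [mul_pos (mul_pos hlam hgℓ) hs]

theorem strictAntiOn (h : IsCauchySolution lam ℓ g v v') (hlam : 0 < lam)
    (hg : ∀ x, 0 ≤ g x) (hganti : Antitone g) (hgℓ : 0 < g ℓ) : StrictAntiOn v (Ici 0) :=
  strictAntiOn_of_hasDerivWithinAt_neg (convex_Ici 0)
    (fun x hx => (h.hasDerivAt x hx).continuousAt.continuousWithinAt)
    (fun x hx => (h.hasDerivAt x (interior_subset hx)).hasDerivWithinAt)
    (fun x hx => h.deriv_neg hlam hg hganti hgℓ (by simpa using hx))

theorem exists_eq_zero (h : IsCauchySolution lam ℓ g v v') (hlam : 0 < lam)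
    (hg : ∀ x, 0 ≤ g x) (hganti : Antitone g) (hgℓ : 0 < g ℓ) (hℓ : 0 < ℓ) :
    ∃ R > 0, v R = 0 := by
  set c := lam * g ℓ / 2
  have hc : 0 < c := by positivity
  set s₀ := Real.sqrt (ℓ / c)
  have hs₀ : v s₀ ≤ 0 := by
    have := h.le_init_sub hlam.le hg hganti (Real.sqrt_nonneg (ℓ / c))
    rwa [Real.sq_sqrt (by positivity), mul_div_cancel₀ _ hc.ne', sub_self] at this
  obtain ⟨R, hR, hvR⟩ := intermediate_value_Icc' (Real.sqrt_nonneg _)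
    (fun x hx => (h.hasDerivAt x hx.1).continuousAt.continuousWithinAt)
    ⟨hs₀, h.init ▸ hℓ.le⟩
  refine ⟨R, hR.1.lt_of_ne ?_, hvR⟩
  rintro rfl
  linarith [h.init]

theorem abs_deriv_mul_eq_one (h : IsCauchySolution lam ℓ g v v') (hg : Continuous g)
    (hlam : 0 ≤ lam) (hs : 0 ≤ s) (hne : v' s ≠ 0) :
    |v' s| * (1 / Real.sqrt (2 * lam) * (1 / Real.sqrt (∫ t in v s..ℓ, g t))) = 1 := by
  have habs : |v' s| = Real.sqrt (2 * lam) * Real.sqrt (∫ t in v s..ℓ, g t) := by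
    rw [← Real.sqrt_sq_eq_abs, h.sq_deriv_eq hg hs, Real.sqrt_mul (by positivity)]
  have hpos : 0 < |v' s| := abs_pos.2 hne
  rw [habs] at hpos ⊢
  rw [one_div_mul_one_div, mul_one_div, div_self hpos.ne']

end IsCauchySolution

theorem stmt10_general (L lam ℓ : ℝ) (hlam : 0 < lam) (hℓ : 0 < ℓ) (hℓL : ℓ < L)
    (g : ℝ → ℝ) (hgcont : Continuous g) (hganti : Antitone g)
    (hgpos : ∀ s < L, 0 < g s)
    (hgrange : ∀ s, 0 ≤ g s ∧ g s ≤ 1)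
    (v v' : ℝ → ℝ)
    (hv : ∀ s, 0 ≤ s → HasDerivAt v (v' s) s)
    (hv'' : ∀ s, 0 ≤ s → HasDerivAt v' (-(lam * g (v s))) s)
    (hv0 : v 0 = ℓ) (hv'0 : v' 0 = 0) :
    ∃ R > 0, v R = 0 ∧
      R = (1 / Real.sqrt (2 * lam)) *
        ∫ t in (0:ℝ)..ℓ, 1 / Real.sqrt (∫ s in t..ℓ, g s) := by
  have h : IsCauchySolution lam ℓ g v v' := ⟨hv, hv'', hv0, hv'0⟩
  have hg : ∀ s, 0 ≤ g s := fun s => (hgrange s).1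
  have hgℓ : 0 < g ℓ := hgpos ℓ hℓL
  obtain ⟨R, hR, hvR⟩ := h.exists_eq_zero hlam hg hganti hgℓ hℓ
  refine ⟨R, hR, hvR, ?_⟩
  have htime := integral_Icc_eq_of_abs_deriv_mul_eq_one
    (φ := fun t => 1 / Real.sqrt (2 * lam) * (1 / Real.sqrt (∫ s in t..ℓ, g s))) hR.le
    (fun s hs => hv s hs.1)
    ((h.strictAntiOn hlam hg hganti hgℓ).mono Icc_subset_Ici_self)
    (fun s hs => h.abs_deriv_mul_eq_one hgcont hlam.le hs.1.le
      (h.deriv_neg hlam hg hganti hgℓ hs.1).ne)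
  rw [hvR, hv0, sub_zero] at htime
  rw [← intervalIntegral.integral_const_mul, intervalIntegral.integral_of_le hℓ.le,
    ← integral_Icc_eq_integral_Ioc, htime]

theorem stmt10 (L lam ℓ : ℝ) (hL : 0 < L) (hlam : 0 < lam) (hℓ : 0 < ℓ) (hℓL : ℓ < L)
    (g : ℝ → ℝ) (hgcont : Continuous g) (hganti : Antitone g)
    (hgneg : ∀ s ≤ 0, g s = 1) (hgL : g L = 0) (hgpos : ∀ s < L, 0 < g s)
    (hgrange : ∀ s, 0 ≤ g s ∧ g s ≤ 1)
    (v v' : ℝ → ℝ)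
    (hv : ∀ s, 0 ≤ s → HasDerivAt v (v' s) s)
    (hv'' : ∀ s, 0 ≤ s → HasDerivAt v' (-(lam * g (v s))) s)
    (hv0 : v 0 = ℓ) (hv'0 : v' 0 = 0) :
    ∃ R > 0, v R = 0 ∧
      R = (1 / Real.sqrt (2 * lam)) *
        ∫ t in (0:ℝ)..ℓ, 1 / Real.sqrt (∫ s in t..ℓ, g s) :=
  stmt10_general L lam ℓ hlam hℓ hℓL g hgcont hganti hgpos hgrange v v' hv hv'' hv0 hv'0
end

section
/- Let g : [0,L] → [0,∞) be decreasing with ∫₀^L dt/√(∫ₜ^L g(s)ds) < ∞. Set L_k = L(1 − 2^{−k}) and θ(t) = Σ_{k≥0} χ_{[L_k,L_{k+1})}(t)/√(∫ₜ^{L_{k+1}} g(s)ds). Then ∫₀^L θ(t)dt ≤ (√2/(√2−1)) ∫₀^L dt/√(∫ₜ^L g(s)ds) < ∞. -/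
/-! On the dyadic piece `[L_k, L_{k+1})`, monotonicity of `g` gives
`∫ₜ^{L_{k+1}} g ≥ (L_{k+1} - t) g(L_{k+1})`, so the integral of `θ` over the piece is at most
`2 √(L_{k+1} - L_k) / √g(L_{k+1})`. On the next piece `[L_{k+1}, L_{k+2})` it gives
`∫ₜ^L g ≤ (L - t) g(L_{k+1})`, so the integral of `1/√(∫ₜ^L g)` there is at least
`2 (√(L - L_{k+1}) - √(L - L_{k+2})) / √g(L_{k+1})`.
As `L_{k+1} - L_k = L - L_{k+1} = 2 (L - L_{k+2})`, the first bound is `√2/(√2-1)` times the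
second, and summing over `k` gives the claim together with the integrability of `θ`. -/

open MeasureTheory Set Filter Topology Function
open scoped ENNReal

lemma hasDerivAt_neg_two_mul_sqrt_sub {c t : ℝ} (K : ℝ) (ht : t < c) :
    HasDerivAt (fun x => -2 * K * √(c - x)) (K / √(c - t)) t := by
  refine ((((hasDerivAt_id' t).const_sub c).sqrt (sub_pos.2 ht).ne').const_mul
    (-2 * K)).congr_deriv ?_
  field_simp

lemma lintegral_Ico_div_sqrt_sub {a b c K : ℝ} (hab : a ≤ b) (hbc : b ≤ c) (hK : 0 ≤ K) :
    ∫⁻ t in Ico a b, ENNReal.ofReal (K / √(c - t)) =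
      ENNReal.ofReal (2 * K * (√(c - a) - √(c - b))) := by
  have hcont : ContinuousOn (fun x => -2 * K * √(c - x)) (Icc a b) := by fun_prop
  have hderiv : ∀ x ∈ Ioo a b, HasDerivAt (fun x => -2 * K * √(c - x)) (K / √(c - x)) x :=
    fun x hx => hasDerivAt_neg_two_mul_sqrt_sub K (hx.2.trans_le hbc)
  have hint : IntegrableOn (fun t => K / √(c - t)) (Ioc a b) :=
    intervalIntegral.integrableOn_deriv_of_nonneg hcont hderiv fun _ _ => by positivity
  rw [setLIntegral_congr Ico_ae_eq_Ioc,
    ← ofReal_integral_eq_lintegral_ofReal hint (ae_of_all _ fun _ => by positivity),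
    ← intervalIntegral.integral_of_le hab,
    intervalIntegral.integral_eq_sub_of_hasDerivAt_of_le hab hcont hderiv
      ((intervalIntegrable_iff_integrableOn_Ioc_of_le hab).2 hint)]
  ring_nf

section Antitone

variable {g : ℝ → ℝ} {a b c : ℝ}

lemma AntitoneOn.mul_le_intervalIntegral (hg : AntitoneOn g (Icc a b)) (hab : a ≤ b) :
    (b - a) * g b ≤ ∫ x in a..b, g x := by
  have hint : IntervalIntegrable g volume a b :=
    AntitoneOn.intervalIntegrable (by rwa [uIcc_of_le hab])
  simpa [mul_comm] using intervalIntegral.integral_mono_on hab intervalIntegrable_const hint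
    fun x hx => hg hx (right_mem_Icc.2 hab) hx.2

lemma AntitoneOn.intervalIntegral_le_mul (hg : AntitoneOn g (Icc a b)) (hab : a ≤ b) :
    ∫ x in a..b, g x ≤ (b - a) * g a := by
  have hint : IntervalIntegrable g volume a b :=
    AntitoneOn.intervalIntegrable (by rwa [uIcc_of_le hab])
  simpa [mul_comm] using intervalIntegral.integral_mono_on hab hint intervalIntegrable_const
    fun x hx => hg (left_mem_Icc.2 hab) hx hx.1

lemma AntitoneOn.intervalIntegral_pos (hg : AntitoneOn g (Icc a b))
    (hpos : ∀ x ∈ Ioo a b, 0 < g x) (hab : a < b) : 0 < ∫ x in a..b, g x :=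
  intervalIntegral.intervalIntegral_pos_of_pos_on
    (AntitoneOn.intervalIntegrable (by rwa [uIcc_of_le hab.le])) hpos hab

lemma AntitoneOn.continuousOn_one_div_sqrt_integral (hg : AntitoneOn g (Icc a b))
    (hpos : ∀ x ∈ Ioo a b, 0 < g x) :
    ContinuousOn (fun t => 1 / √(∫ s in t..b, g s)) (Ico a b) := by
  rcases lt_or_ge b a with hba | hab
  · simp [Ico_eq_empty_of_le hba.le]
  have hF : ContinuousOn (fun t => ∫ s in t..b, g s) (Ico a b) :=
    (intervalIntegral.continuousOn_primitive_interval_left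
      (hg.integrableOn_isCompact isCompact_Icc |>.mono_set (uIcc_of_le hab).subset)).mono
      (by rw [uIcc_of_le hab]; exact Ico_subset_Icc_self)
  refine continuousOn_const.div hF.sqrt fun t ht => (Real.sqrt_pos.2 ?_).ne'
  exact (hg.mono (Icc_subset_Icc_left ht.1)).intervalIntegral_pos
    (fun x hx => hpos x ⟨ht.1.trans_lt hx.1, hx.2⟩) ht.2

lemma AntitoneOn.one_div_sqrt_integral_le (hg : AntitoneOn g (Icc a b)) (hgb : 0 < g b)
    {t : ℝ} (ht : t ∈ Ico a b) :
    1 / √(∫ s in t..b, g s) ≤ (√(g b))⁻¹ / √(b - t) := by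
  have hbt : 0 < b - t := sub_pos.2 ht.2
  have hlow := (hg.mono (Icc_subset_Icc_left ht.1)).mul_le_intervalIntegral ht.2.le
  rw [inv_div_left, ← Real.sqrt_mul hbt.le, ← one_div]
  exact one_div_le_one_div_of_le (Real.sqrt_pos.2 (mul_pos hbt hgb)) (Real.sqrt_le_sqrt hlow)

lemma AntitoneOn.le_one_div_sqrt_integral (hg : AntitoneOn g (Icc a c))
    (hpos : ∀ x ∈ Ico a c, 0 < g x) {t : ℝ} (ht : t ∈ Ico a c) :
    (√(g a))⁻¹ / √(c - t) ≤ 1 / √(∫ s in t..c, g s) := by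
  have hct : 0 < c - t := sub_pos.2 ht.2
  have hgt : AntitoneOn g (Icc t c) := hg.mono (Icc_subset_Icc_left ht.1)
  have hup : ∫ s in t..c, g s ≤ (c - t) * g a :=
    (hgt.intervalIntegral_le_mul ht.2.le).trans (mul_le_mul_of_nonneg_left
      (hg (left_mem_Icc.2 (ht.1.trans ht.2.le)) (Ico_subset_Icc_self ht) ht.1) hct.le)
  have hint : 0 < ∫ s in t..c, g s :=
    hgt.intervalIntegral_pos (fun x hx => hpos x ⟨ht.1.trans hx.1.le, hx.2⟩) ht.2
  rw [inv_div_left, ← Real.sqrt_mul hct.le, ← one_div]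
  exact one_div_le_one_div_of_le (Real.sqrt_pos.2 hint) (Real.sqrt_le_sqrt hup)

lemma AntitoneOn.lintegral_one_div_sqrt_integral_le (hg : AntitoneOn g (Icc a b)) (hab : a ≤ b)
    (hgb : 0 < g b) :
    ∫⁻ t in Ico a b, ENNReal.ofReal (1 / √(∫ s in t..b, g s)) ≤
      ENNReal.ofReal (2 * (√(g b))⁻¹ * √(b - a)) :=
  calc ∫⁻ t in Ico a b, ENNReal.ofReal (1 / √(∫ s in t..b, g s))
      ≤ ∫⁻ t in Ico a b, ENNReal.ofReal ((√(g b))⁻¹ / √(b - t)) :=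
        setLIntegral_mono' measurableSet_Ico fun t ht =>
          ENNReal.ofReal_le_ofReal (hg.one_div_sqrt_integral_le hgb ht)
    _ = ENNReal.ofReal (2 * (√(g b))⁻¹ * √(b - a)) := by
        rw [lintegral_Ico_div_sqrt_sub hab le_rfl (by positivity)]
        simp

lemma AntitoneOn.le_lintegral_one_div_sqrt_integral (hg : AntitoneOn g (Icc a c))
    (hpos : ∀ x ∈ Ico a c, 0 < g x) (hab : a ≤ b) (hbc : b ≤ c) :
    ENNReal.ofReal (2 * (√(g a))⁻¹ * (√(c - a) - √(c - b))) ≤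
      ∫⁻ t in Ico a b, ENNReal.ofReal (1 / √(∫ s in t..c, g s)) := by
  rw [← lintegral_Ico_div_sqrt_sub hab hbc (by positivity)]
  exact setLIntegral_mono' measurableSet_Ico fun t ht => ENNReal.ofReal_le_ofReal
    (hg.le_one_div_sqrt_integral hpos ⟨ht.1, ht.2.trans_le hbc⟩)

end Antitone

lemma tsum_indicator_apply_of_mem {ι α M : Type*} [AddCommMonoid M] [TopologicalSpace M]
    {s : ι → Set α} (hs : Pairwise (Disjoint on s)) (f : ι → α → M) {i : ι} {x : α}
    (hx : x ∈ s i) : ∑' j, (s j).indicator (f j) x = f i x := by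
  rw [tsum_eq_single i fun j hj => indicator_of_notMem (disjoint_left.1 (hs hj.symm) hx) _,
    indicator_of_mem hx]

lemma iUnion_Ico_eq_Ico_of_tendsto {X : Type*} [LinearOrder X] [TopologicalSpace X]
    [OrderClosedTopology X] {a : ℕ → X} {l : X} (ha : Monotone a)
    (hlim : Tendsto a atTop (𝓝 l)) : ⋃ k, Ico (a k) (a (k + 1)) = Ico (a 0) l := by
  refine Subset.antisymm (iUnion_subset fun k => Ico_subset_Ico (ha k.zero_le)
    (ha.ge_of_tendsto hlim _)) fun t ht => ?_
  obtain ⟨N, hN⟩ := (hlim.eventually (eventually_gt_nhds ht.2)).exists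
  obtain ⟨k, -, hk⟩ := mem_iUnion₂.1 (Ico_subset_biUnion_Ico N a ⟨ht.1, hN⟩)
  exact mem_iUnion.2 ⟨k, hk⟩

lemma lintegral_Ico_eq_tsum {X : Type*} [LinearOrder X] [TopologicalSpace X]
    [OrderClosedTopology X] [MeasurableSpace X] [OpensMeasurableSpace X] {μ : Measure X}
    {a : ℕ → X} {l : X} (ha : Monotone a) (hlim : Tendsto a atTop (𝓝 l)) (f : X → ℝ≥0∞) :
    ∫⁻ x in Ico (a 0) l, f x ∂μ = ∑' k, ∫⁻ x in Ico (a k) (a (k + 1)), f x ∂μ := by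
  rw [← iUnion_Ico_eq_Ico_of_tendsto ha hlim,
    lintegral_iUnion (fun _ => measurableSet_Ico)
      (by simpa only [Order.succ_eq_add_one] using ha.pairwise_disjoint_on_Ico_succ)]

lemma integrableOn_and_integral_le_of_lintegral_le {α : Type*} [MeasurableSpace α]
    {μ : Measure α} {s : Set α} {f : α → ℝ} {r : ℝ}
    (hf : AEStronglyMeasurable f (μ.restrict s)) (hf0 : 0 ≤ᵐ[μ.restrict s] f) (hr : 0 ≤ r)
    (h : ∫⁻ x in s, ENNReal.ofReal (f x) ∂μ ≤ ENNReal.ofReal r) :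
    IntegrableOn f s μ ∧ ∫ x in s, f x ∂μ ≤ r := by
  refine ⟨⟨hf, (hasFiniteIntegral_iff_ofReal hf0).2 (h.trans_lt ENNReal.ofReal_lt_top)⟩, ?_⟩
  rw [integral_eq_lintegral_of_nonneg_ae hf0 hf, ← ENNReal.toReal_ofReal hr]
  exact ENNReal.toReal_mono ENNReal.ofReal_ne_top h

noncomputable def dyadicPoint (L : ℝ) (k : ℕ) : ℝ := L * (1 - (1 / 2) ^ k)

lemma dyadicPoint_zero (L : ℝ) : dyadicPoint L 0 = 0 := by simp [dyadicPoint]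

lemma sub_dyadicPoint (L : ℝ) (k : ℕ) : L - dyadicPoint L k = L * (1 / 2) ^ k := by
  rw [dyadicPoint]; ring

lemma strictMono_dyadicPoint {L : ℝ} (hL : 0 < L) : StrictMono (dyadicPoint L) :=
  strictMono_nat_of_lt_succ fun k => by
    rw [← sub_lt_sub_iff_left L, sub_dyadicPoint, sub_dyadicPoint, pow_succ]
    nlinarith [pow_pos (one_half_pos (α := ℝ)) k]

lemma dyadicPoint_lt {L : ℝ} (hL : 0 < L) (k : ℕ) : dyadicPoint L k < L := by
  rw [← sub_pos, sub_dyadicPoint]; positivity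

lemma tendsto_dyadicPoint (L : ℝ) : Tendsto (dyadicPoint L) atTop (𝓝 L) := by
  have h := ((tendsto_pow_atTop_nhds_zero_of_lt_one (by norm_num : (0 : ℝ) ≤ 1 / 2)
    (by norm_num)).const_sub 1).const_mul L
  rwa [sub_zero, mul_one] at h

lemma sqrt_two_div_sqrt_two_sub_one_nonneg : 0 ≤ √2 / (√2 - 1) :=
  div_nonneg (Real.sqrt_nonneg 2) (by linarith [Real.one_lt_sqrt_two])

lemma sqrt_eq_mul_sub_sqrt_half (d : ℝ) : √d = √2 / (√2 - 1) * (√d - √(d / 2)) := by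
  have h2 := Real.one_lt_sqrt_two
  rw [Real.sqrt_div' d zero_le_two, div_mul_eq_mul_div, eq_div_iff (by linarith)]
  field_simp

lemma sqrt_dyadicPoint_succ_sub (L : ℝ) (k : ℕ) :
    √(dyadicPoint L (k + 1) - dyadicPoint L k) =
      √2 / (√2 - 1) * (√(L - dyadicPoint L (k + 1)) - √(L - dyadicPoint L (k + 2))) := by
  have hsucc : dyadicPoint L (k + 1) - dyadicPoint L k = L - dyadicPoint L (k + 1) := by
    simp only [dyadicPoint]; ring
  have hhalf : L - dyadicPoint L (k + 2) = (L - dyadicPoint L (k + 1)) / 2 := by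
    simp only [sub_dyadicPoint]; ring
  rw [hsucc, hhalf, ← sqrt_eq_mul_sub_sqrt_half]

lemma dyadicPoint_mem_Ico {L : ℝ} (hL : 0 < L) (k : ℕ) : dyadicPoint L k ∈ Ico 0 L :=
  ⟨dyadicPoint_zero L ▸ (strictMono_dyadicPoint hL).monotone k.zero_le, dyadicPoint_lt hL k⟩

lemma Icc_dyadicPoint_subset {L : ℝ} (hL : 0 < L) (k l : ℕ) :
    Icc (dyadicPoint L k) (dyadicPoint L l) ⊆ Icc 0 L :=
  Icc_subset_Icc (dyadicPoint_mem_Ico hL k).1 (dyadicPoint_lt hL l).le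

noncomputable def dyadicMajorant (L : ℝ) (g : ℝ → ℝ) (t : ℝ) : ℝ :=
  ∑' k : ℕ, (Ico (dyadicPoint L k) (dyadicPoint L (k + 1))).indicator
    (fun t' => 1 / √(∫ s in t'..dyadicPoint L (k + 1), g s)) t

section DyadicMajorant

variable {L : ℝ} {g : ℝ → ℝ}

lemma dyadicMajorant_nonneg (t : ℝ) : 0 ≤ dyadicMajorant L g t :=
  tsum_nonneg fun _ => indicator_nonneg (fun _ _ => by positivity) _

lemma dyadicMajorant_eq_of_mem (hL : 0 < L) {k : ℕ} {t : ℝ}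
    (ht : t ∈ Ico (dyadicPoint L k) (dyadicPoint L (k + 1))) :
    dyadicMajorant L g t = 1 / √(∫ s in t..dyadicPoint L (k + 1), g s) :=
  tsum_indicator_apply_of_mem (by simpa only [Order.succ_eq_add_one] using
    (strictMono_dyadicPoint hL).monotone.pairwise_disjoint_on_Ico_succ) _ ht

lemma aestronglyMeasurable_dyadicMajorant (hL : 0 < L) (hanti : AntitoneOn g (Icc 0 L))
    (hpos : ∀ t ∈ Ico 0 L, 0 < g t) :
    AEStronglyMeasurable (dyadicMajorant L g) (volume.restrict (Ioo 0 L)) := by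
  have hcover : Ioo 0 L ⊆ ⋃ k, Ico (dyadicPoint L k) (dyadicPoint L (k + 1)) := by
    rw [iUnion_Ico_eq_Ico_of_tendsto (strictMono_dyadicPoint hL).monotone
      (tendsto_dyadicPoint L), dyadicPoint_zero]
    exact Ioo_subset_Ico_self
  refine (aestronglyMeasurable_iUnion_iff.2 fun k => ?_).mono_set hcover
  have hsub := Icc_dyadicPoint_subset hL k (k + 1)
  have hcont := (hanti.mono hsub).continuousOn_one_div_sqrt_integral fun x hx =>
    hpos x ⟨(hsub (Ioo_subset_Icc_self hx)).1, hx.2.trans (dyadicPoint_lt hL _)⟩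
  exact (hcont.aestronglyMeasurable measurableSet_Ico).congr <|
    (ae_restrict_iff' measurableSet_Ico).2 <| ae_of_all _ fun t ht =>
      (dyadicMajorant_eq_of_mem hL ht).symm

lemma lintegral_dyadicMajorant_Ico_le (hL : 0 < L) (hanti : AntitoneOn g (Icc 0 L))
    (hpos : ∀ t ∈ Ico 0 L, 0 < g t) (k : ℕ) :
    ∫⁻ t in Ico (dyadicPoint L k) (dyadicPoint L (k + 1)),
        ENNReal.ofReal (dyadicMajorant L g t) ≤
      ENNReal.ofReal (√2 / (√2 - 1)) *
        ∫⁻ t in Ico (dyadicPoint L (k + 1)) (dyadicPoint L (k + 2)),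
          ENNReal.ofReal (1 / √(∫ s in t..L, g s)) := by
  have hmono := (strictMono_dyadicPoint hL).monotone
  have hb := dyadicPoint_mem_Ico hL (k + 1)
  calc _ = ∫⁻ t in Ico (dyadicPoint L k) (dyadicPoint L (k + 1)),
          ENNReal.ofReal (1 / √(∫ s in t..dyadicPoint L (k + 1), g s)) :=
        setLIntegral_congr_fun measurableSet_Ico fun t ht => by
          rw [dyadicMajorant_eq_of_mem hL ht]
    _ ≤ ENNReal.ofReal (2 * (√(g (dyadicPoint L (k + 1))))⁻¹ *
          √(dyadicPoint L (k + 1) - dyadicPoint L k)) :=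
        (hanti.mono (Icc_dyadicPoint_subset hL k (k + 1))).lintegral_one_div_sqrt_integral_le
          (hmono k.le_succ) (hpos _ hb)
    _ = ENNReal.ofReal (√2 / (√2 - 1)) *
          ENNReal.ofReal (2 * (√(g (dyadicPoint L (k + 1))))⁻¹ *
            (√(L - dyadicPoint L (k + 1)) - √(L - dyadicPoint L (k + 2)))) := by
        rw [← ENNReal.ofReal_mul sqrt_two_div_sqrt_two_sub_one_nonneg, sqrt_dyadicPoint_succ_sub]
        ring_nf
    _ ≤ _ := by
        gcongr
        exact (hanti.mono (Icc_subset_Icc_left hb.1)).le_lintegral_one_div_sqrt_integral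
          (fun x hx => hpos x ⟨hb.1.trans hx.1, hx.2⟩) (hmono (k + 1).le_succ)
          (dyadicPoint_lt hL _).le

lemma lintegral_dyadicMajorant_le (hL : 0 < L) (hanti : AntitoneOn g (Icc 0 L))
    (hpos : ∀ t ∈ Ico 0 L, 0 < g t) :
    ∫⁻ t in Ioo 0 L, ENNReal.ofReal (dyadicMajorant L g t) ≤
      ENNReal.ofReal (√2 / (√2 - 1)) *
        ∫⁻ t in Ioo 0 L, ENNReal.ofReal (1 / √(∫ s in t..L, g s)) := by
  have hsplit : ∀ f : ℝ → ℝ≥0∞, ∫⁻ t in Ioo 0 L, f t =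
      ∑' k, ∫⁻ t in Ico (dyadicPoint L k) (dyadicPoint L (k + 1)), f t := fun f => by
    rw [setLIntegral_congr Ioo_ae_eq_Ico, ← lintegral_Ico_eq_tsum
      (strictMono_dyadicPoint hL).monotone (tendsto_dyadicPoint L), dyadicPoint_zero]
  rw [hsplit, hsplit, ← ENNReal.tsum_mul_left]
  calc _ ≤ ∑' k, ENNReal.ofReal (√2 / (√2 - 1)) *
        ∫⁻ t in Ico (dyadicPoint L (k + 1)) (dyadicPoint L (k + 2)),
          ENNReal.ofReal (1 / √(∫ s in t..L, g s)) :=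
        ENNReal.tsum_le_tsum (lintegral_dyadicMajorant_Ico_le hL hanti hpos)
    _ ≤ _ := ENNReal.tsum_comp_le_tsum_of_injective (add_left_injective 1) fun k =>
        ENNReal.ofReal (√2 / (√2 - 1)) *
          ∫⁻ t in Ico (dyadicPoint L k) (dyadicPoint L (k + 1)),
            ENNReal.ofReal (1 / √(∫ s in t..L, g s))

end DyadicMajorant

theorem stmt13_general (L : ℝ) (hL : 0 < L) (g : ℝ → ℝ)
    (hanti : AntitoneOn g (Set.Icc 0 L))
    (hpos : ∀ t ∈ Set.Ico 0 L, 0 < g t)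
    (hfin : IntegrableOn (fun t => 1 / Real.sqrt (∫ s in t..L, g s)) (Set.Ioo 0 L) volume)
    (Lk : ℕ → ℝ) (hLk : ∀ k, Lk k = L * (1 - (1 / 2) ^ k))
    (θ : ℝ → ℝ)
    (hθ : ∀ t, θ t = ∑' k : ℕ,
      Set.indicator (Set.Ico (Lk k) (Lk (k + 1)))
        (fun t' => 1 / Real.sqrt (∫ s in t'..(Lk (k + 1)), g s)) t) :
    IntegrableOn θ (Set.Ioo 0 L) volume ∧
    ∫ t in (0:ℝ)..L, θ t ≤ (Real.sqrt 2 / (Real.sqrt 2 - 1)) *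
      ∫ t in (0:ℝ)..L, 1 / Real.sqrt (∫ s in t..L, g s) := by
  obtain rfl : Lk = dyadicPoint L := funext hLk
  obtain rfl : θ = dyadicMajorant L g := funext hθ
  have hf_nonneg : ∀ t, 0 ≤ 1 / √(∫ s in t..L, g s) := fun _ => by positivity
  have hbound := lintegral_dyadicMajorant_le hL hanti hpos
  rw [← ofReal_integral_eq_lintegral_ofReal hfin (ae_of_all _ hf_nonneg),
    ← ENNReal.ofReal_mul sqrt_two_div_sqrt_two_sub_one_nonneg] at hbound
  obtain ⟨hint, hle⟩ := integrableOn_and_integral_le_of_lintegral_le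
    (aestronglyMeasurable_dyadicMajorant hL hanti hpos) (ae_of_all _ dyadicMajorant_nonneg)
    (mul_nonneg sqrt_two_div_sqrt_two_sub_one_nonneg (setIntegral_nonneg measurableSet_Ioo
      fun t _ => hf_nonneg t)) hbound
  refine ⟨hint, ?_⟩
  simpa only [intervalIntegral.integral_of_le hL.le, integral_Ioc_eq_integral_Ioo] using hle

theorem stmt13 (L : ℝ) (hL : 0 < L) (g : ℝ → ℝ)
    (hanti : AntitoneOn g (Set.Icc 0 L)) (hnonneg : ∀ t ∈ Set.Icc 0 L, 0 ≤ g t)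
    (hpos : ∀ t ∈ Set.Ico 0 L, 0 < g t)
    (hfin : IntegrableOn (fun t => 1 / Real.sqrt (∫ s in t..L, g s)) (Set.Ioo 0 L) volume)
    (Lk : ℕ → ℝ) (hLk : ∀ k, Lk k = L * (1 - (1 / 2) ^ k))
    (θ : ℝ → ℝ)
    (hθ : ∀ t, θ t = ∑' k : ℕ,
      Set.indicator (Set.Ico (Lk k) (Lk (k + 1)))
        (fun t' => 1 / Real.sqrt (∫ s in t'..(Lk (k + 1)), g s)) t) :
    IntegrableOn θ (Set.Ioo 0 L) volume ∧
    ∫ t in (0:ℝ)..L, θ t ≤ (Real.sqrt 2 / (Real.sqrt 2 - 1)) *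
      ∫ t in (0:ℝ)..L, 1 / Real.sqrt (∫ s in t..L, g s) :=
  stmt13_general L hL g hanti hpos hfin Lk hLk θ hθ
end

section
/- Let g : [0,L] → [0,∞) be continuous and decreasing, and suppose v₁, v₂ are C² solutions on [0,S] of −v'' = λg(v) with v₁(0) < v₂(0), v₁'(0) = v₂'(0) = 0. If v₁ ≤ v₂ on [0,s̄] and v₁(s̄) = v₂(s̄) for some s̄ ∈ (0,S], then v₁' ≡ v₂' on [0,s̄], which is impossible; hence v₁(s) < v₂(s) for all s ∈ [0,S]. -/
/-!
Let `w = v₂ - v₁`. As long as `w > 0`, antitonicity of `g` gives `w'' = λ (g v₁ - g v₂) ≥ 0`,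
so `w'` grows from `w'(0) = 0` and stays nonnegative, hence `w` cannot decrease from `w(0) > 0`.
Applied on `[0, s̄]` with `s̄` the first point where `w ≤ 0`, this yields `w(s̄) ≥ w(0) > 0`,
a contradiction.
-/

open Set

lemma monotoneOn_Icc_of_hasDerivAt_nonneg {f f' : ℝ → ℝ} {a b : ℝ}
    (hf : ∀ s ∈ Icc a b, HasDerivAt f (f' s) s) (hf' : ∀ s ∈ Ioo a b, 0 ≤ f' s) :
    MonotoneOn f (Icc a b) := by
  refine monotoneOn_of_hasDerivWithinAt_nonneg (f' := f') (convex_Icc a b)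
    (fun s hs ↦ (hf s hs).continuousAt.continuousWithinAt) (fun s hs ↦ ?_) (fun s hs ↦ ?_)
  all_goals rw [interior_Icc] at hs
  exacts [(hf s (Ioo_subset_Icc_self hs)).hasDerivWithinAt, hf' s hs]

lemma ContinuousOn.exists_first_nonpos {w : ℝ → ℝ} {a b : ℝ} (hw : ContinuousOn w (Icc a b))
    (ha : 0 < w a) (h : ∃ s ∈ Icc a b, w s ≤ 0) :
    ∃ c ∈ Ioc a b, w c ≤ 0 ∧ ∀ t ∈ Ico a c, 0 < w t := by
  set A := Icc a b ∩ w ⁻¹' Iic 0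
  have hA : A.Nonempty := h
  have hA_bdd : BddBelow A := ⟨a, fun _ hx ↦ hx.1.1⟩
  have hcA : sInf A ∈ A :=
    (hw.preimage_isClosed_of_isClosed isClosed_Icc isClosed_Iic).csInf_mem hA hA_bdd
  obtain ⟨⟨hac, hcb⟩, hwc⟩ := hcA
  have hac' : a < sInf A := hac.lt_of_ne fun h ↦ hwc.not_gt (h ▸ ha)
  refine ⟨sInf A, ⟨hac', hcb⟩, hwc, fun t ht ↦ ?_⟩
  by_contra! hwt
  obtain ⟨hat, htc⟩ := ht
  exact (csInf_le hA_bdd ⟨⟨hat, htc.le.trans hcb⟩, hwt⟩).not_gt htc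

lemma pos_of_hasDerivAt_of_deriv_nonneg_where_pos {w u u' : ℝ → ℝ} {a b : ℝ}
    (hw : ∀ s ∈ Icc a b, HasDerivAt w (u s) s) (hu : ∀ s ∈ Icc a b, HasDerivAt u (u' s) s)
    (hu' : ∀ s ∈ Icc a b, 0 < w s → 0 ≤ u' s) (hwa : 0 < w a) (hua : 0 ≤ u a) :
    ∀ s ∈ Icc a b, 0 < w s := by
  by_contra! h
  have hw_cont : ContinuousOn w (Icc a b) := fun s hs ↦ (hw s hs).continuousAt.continuousWithinAt
  obtain ⟨c, ⟨hac, hcb⟩, hwc, hpos⟩ := hw_cont.exists_first_nonpos hwa h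
  have hsub : Icc a c ⊆ Icc a b := Icc_subset_Icc_right hcb
  have ha_mem : a ∈ Icc a c := left_mem_Icc.2 hac.le
  have hu_mono : MonotoneOn u (Icc a c) :=
    monotoneOn_Icc_of_hasDerivAt_nonneg (fun s hs ↦ hu s (hsub hs)) fun s hs ↦
      hu' s (hsub (Ioo_subset_Icc_self hs)) (hpos s (Ioo_subset_Ico_self hs))
  have hw_mono : MonotoneOn w (Icc a c) :=
    monotoneOn_Icc_of_hasDerivAt_nonneg (fun s hs ↦ hw s (hsub hs)) fun s hs ↦
      hua.trans (hu_mono ha_mem (Ioo_subset_Icc_self hs) hs.1.le)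
  linarith [hw_mono ha_mem (right_mem_Icc.2 hac.le) hac.le]

theorem stmt15_general (lam S : ℝ) (hlam : 0 < lam)
    (g : ℝ → ℝ) (hanti : Antitone g)
    (v₁ v₂ v₁' v₂' : ℝ → ℝ)
    (hv₁ : ∀ s ∈ Set.Icc 0 S, HasDerivAt v₁ (v₁' s) s)
    (hv₁'' : ∀ s ∈ Set.Icc 0 S, HasDerivAt v₁' (-(lam * g (v₁ s))) s)
    (hv₂ : ∀ s ∈ Set.Icc 0 S, HasDerivAt v₂ (v₂' s) s)
    (hv₂'' : ∀ s ∈ Set.Icc 0 S, HasDerivAt v₂' (-(lam * g (v₂ s))) s)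
    (h0 : v₁ 0 < v₂ 0) (h0' : v₁' 0 = 0) (h0'' : v₂' 0 = 0) :
    ∀ s ∈ Set.Icc 0 S, v₁ s < v₂ s := by
  have hw : ∀ s ∈ Icc 0 S, HasDerivAt (v₂ - v₁) ((v₂' - v₁') s) s :=
    fun s hs ↦ (hv₂ s hs).sub (hv₁ s hs)
  have hu : ∀ s ∈ Icc 0 S,
      HasDerivAt (v₂' - v₁') ((fun t ↦ -(lam * g (v₂ t)) - -(lam * g (v₁ t))) s) s :=
    fun s hs ↦ (hv₂'' s hs).sub (hv₁'' s hs)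
  have hu' : ∀ s ∈ Icc 0 S, 0 < (v₂ - v₁) s → 0 ≤ -(lam * g (v₂ s)) - -(lam * g (v₁ s)) := by
    intro s _ hs
    have : g (v₂ s) ≤ g (v₁ s) := hanti (sub_pos.1 hs).le
    nlinarith
  intro s hs
  exact sub_pos.1 <| pos_of_hasDerivAt_of_deriv_nonneg_where_pos hw hu hu'
    (sub_pos.2 h0) (by simp [h0', h0'']) s hs

theorem stmt15 (lam S : ℝ) (hlam : 0 < lam) (hS : 0 < S)
    (g : ℝ → ℝ) (hg : Continuous g) (hanti : Antitone g)
    (v₁ v₂ v₁' v₂' : ℝ → ℝ)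
    (hv₁ : ∀ s ∈ Set.Icc 0 S, HasDerivAt v₁ (v₁' s) s)
    (hv₁'' : ∀ s ∈ Set.Icc 0 S, HasDerivAt v₁' (-(lam * g (v₁ s))) s)
    (hv₂ : ∀ s ∈ Set.Icc 0 S, HasDerivAt v₂ (v₂' s) s)
    (hv₂'' : ∀ s ∈ Set.Icc 0 S, HasDerivAt v₂' (-(lam * g (v₂ s))) s)
    (h0 : v₁ 0 < v₂ 0) (h0' : v₁' 0 = 0) (h0'' : v₂' 0 = 0) :
    ∀ s ∈ Set.Icc 0 S, v₁ s < v₂ s :=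
  stmt15_general lam S hlam g hanti v₁ v₂ v₁' v₂' hv₁ hv₁'' hv₂ hv₂'' h0 h0' h0''
end

section
/- Let u ∈ C¹ near r with u(r) = σ, u continuous, and suppose ∫_r^{r+δ} h(u(s))|u'(s)|² s^{N−1} ds < ∞ where h satisfies (σ−s)^γ h(s) → C > 0 as s → σ⁻ with γ ≥ 1 (so ∫^σ h = ∞). If u has a one-sided derivative u'(r⁺) and u(s) = σ + u'(r⁺)(s−r) + o(s−r), then u'(r⁺) = 0. -/
/-!
Since `u` has right derivative `d` at `r`, `σ - u s = O(s - r)`; and `(σ - t)^γ h t → C > 0` with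
`γ ≥ 1` forces `(σ - t)⁻¹ = O(h t)` as `t → σ⁻`. Hence `(s - r)⁻¹ = O(h (u s))`. If `d ≠ 0`, the
other two factors of the integrand stay away from zero near `r` (`u' → d` by the `C¹` hypothesis),
so the integrand dominates `(s - r)⁻¹`, whose primitive `log (s - r)` is unbounded: it cannot be
integrable near `r`.
-/

open Filter Topology MeasureTheory Asymptotics Set

theorem hasDerivWithinAt_Ioi_of_tendsto_div {f : ℝ → ℝ} {a f' : ℝ}
    (h : Tendsto (fun x => (f x - f a - f' * (x - a)) / (x - a)) (𝓝[>] a) (𝓝 0)) :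
    HasDerivWithinAt f f' (Ioi a) a := by
  refine hasDerivWithinAt_iff_isLittleO.2 ((isLittleO_iff_tendsto' ?_).2 ?_)
  · filter_upwards [self_mem_nhdsWithin] with x hx hx0
    exact absurd (sub_eq_zero.1 hx0) (ne_of_gt hx)
  · simpa only [smul_eq_mul, mul_comm] using h

theorem ContDiffOn.tendsto_deriv_nhdsGT {f : ℝ → ℝ} {a b f' : ℝ}
    (hf : ContDiffOn ℝ 1 f (Icc a b)) (hab : a < b) (hd : HasDerivWithinAt f f' (Ioi a) a) :
    Tendsto (deriv f) (𝓝[>] a) (𝓝 f') := by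
  have ha : a ∈ Icc a b := left_mem_Icc.2 hab.le
  have hIcc : 𝓝[>] a ≤ 𝓝[Icc a b] a := by
    rw [← nhdsWithin_Ioo_eq_nhdsGT hab]
    exact nhdsWithin_mono a Ioo_subset_Icc_self
  have hda : derivWithin f (Icc a b) a = f' :=
    (uniqueDiffWithinAt_Ioi a).eq_deriv _
      (((hf.differentiableOn one_ne_zero) a ha).hasDerivWithinAt.mono_of_mem_nhdsWithin
        (mem_of_superset (Ioc_mem_nhdsGT hab) Ioc_subset_Icc_self)) hd
  have hcont := hf.continuousOn_derivWithin (uniqueDiffOn_Icc hab) le_rfl a ha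
  rw [ContinuousWithinAt, hda] at hcont
  refine (hcont.mono_left hIcc).congr' ?_
  filter_upwards [Ioo_mem_nhdsGT hab] with x hx
  exact derivWithin_of_mem_nhds (Icc_mem_nhds hx.1 hx.2)

theorem inv_sub_isBigO_of_tendsto_rpow_mul {h : ℝ → ℝ} {σ C γ : ℝ} (hγ : 1 ≤ γ) (hC : C ≠ 0)
    (hlim : Tendsto (fun t => (σ - t) ^ γ * h t) (𝓝[<] σ) (𝓝 C)) :
    (fun t => (σ - t)⁻¹) =O[𝓝[<] σ] h := by
  refine IsBigO.of_bound (2 / |C|) ?_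
  have hC2 : ∀ᶠ t in 𝓝[<] σ, |C| / 2 < |(σ - t) ^ γ * h t| :=
    hlim.abs.eventually (eventually_gt_nhds (half_lt_self (abs_pos.2 hC)))
  filter_upwards [hC2, Ioo_mem_nhdsLT (show σ - 1 < σ by linarith)] with t ht hts
  have hpos : 0 < σ - t := sub_pos.2 hts.2
  have hpow : (σ - t) ^ γ ≤ σ - t := by
    simpa using Real.rpow_le_rpow_of_exponent_ge hpos (by linarith [hts.1]) hγ
  rw [abs_mul, abs_of_pos (Real.rpow_pos_of_pos hpos γ)] at ht
  rw [Real.norm_eq_abs, Real.norm_eq_abs, abs_inv, abs_of_pos hpos, div_mul_eq_mul_div,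
    le_div_iff₀ (abs_pos.2 hC), inv_mul_le_iff₀ hpos]
  nlinarith [abs_nonneg (h t)]

theorem not_integrableOn_Ioo_of_inv_sub_isBigO {E : Type*} [NormedAddCommGroup E] {g : ℝ → E}
    {a b : ℝ} (hab : a < b) (hg : (fun x => (x - a)⁻¹) =O[𝓝[>] a] g) :
    ¬IntegrableOn g (Ioo a b) := by
  have hlog : ∀ᶠ x in 𝓝[>] a, HasDerivAt (fun x => Real.log (x - a)) (x - a)⁻¹ x := by
    filter_upwards [self_mem_nhdsWithin] with x hx
    simpa using ((hasDerivAt_id x).sub_const a).log (sub_pos.2 hx).ne'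
  have hlog_top : Tendsto (fun x => ‖Real.log (x - a)‖) (𝓝[>] a) atTop := by
    refine tendsto_abs_atBot_atTop.comp (Real.tendsto_log_nhdsGT_zero.comp ?_)
    refine tendsto_nhdsWithin_iff.2 ⟨?_, ?_⟩
    · simpa using ((continuous_sub_right a).tendsto a).mono_left nhdsWithin_le_nhds
    · filter_upwards [self_mem_nhdsWithin] with x (hx : a < x) using sub_pos.2 hx
  exact not_integrableOn_of_tendsto_norm_atTop_of_deriv_isBigO_filter _ (Ioo_mem_nhdsGT hab)
    (hlog.mono fun x hx => hx.differentiableAt) hlog_top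
    (hg.congr' (hlog.mono fun x hx => hx.deriv.symm) EventuallyEq.rfl)

theorem one_isBigO_of_tendsto {α : Type*} {l : Filter α} {f : α → ℝ} {c : ℝ}
    (hf : Tendsto f l (𝓝 c)) (hc : c ≠ 0) : (fun _ => (1 : ℝ)) =O[l] f :=
  (isBigO_const_left_iff_pos_le_norm one_ne_zero).2
    ⟨‖c‖ / 2, by positivity, hf.norm.eventually (eventually_ge_nhds (by simp [hc]))⟩

theorem stmt19_general (N : ℕ) (r δ σ C γ d : ℝ)
    (hr : 0 < r) (hδ : 0 < δ) (hC : 0 < C) (hγ1 : 1 ≤ γ)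
    (h : ℝ → ℝ)
    (hlim : Tendsto (fun s => (σ - s) ^ γ * h s) (𝓝[<] σ) (𝓝 C))
    (u : ℝ → ℝ) (hu : ContDiffOn ℝ 1 u (Set.Icc r (r + δ)))
    (hur : u r = σ)
    (hlt : ∀ s ∈ Set.Ioc r (r + δ), u s < σ)
    (hexp : Tendsto (fun s => (u s - σ - d * (s - r)) / (s - r)) (𝓝[>] r) (𝓝 0))
    (hint : IntegrableOn (fun s => h (u s) * (deriv u s) ^ 2 * s ^ (N - 1))
      (Set.Ioo r (r + δ)) volume) :
    d = 0 := by
  have hrδ : r < r + δ := by linarith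
  have hud : HasDerivWithinAt u d (Ioi r) r := hasDerivWithinAt_Ioi_of_tendsto_div (by rwa [hur])
  have hbelow : ∀ᶠ s in 𝓝[>] r, u s < σ := mem_of_superset (Ioc_mem_nhdsGT hrδ) hlt
  have hgap : (fun s => (s - r)⁻¹) =O[𝓝[>] r] fun s => (σ - u s)⁻¹ := by
    have hO : (fun s => σ - u s) =O[𝓝[>] r] fun s => s - r := by
      simpa only [hur, neg_sub] using hud.hasFDerivWithinAt.isBigO_sub.neg_left
    exact hO.inv_rev (hbelow.mono fun s hs h0 => absurd (sub_eq_zero.1 h0) hs.ne')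
  have hu_to : Tendsto u (𝓝[>] r) (𝓝[<] σ) :=
    tendsto_nhdsWithin_iff.2 ⟨hur ▸ hud.continuousWithinAt.tendsto, hbelow⟩
  have hblowup : (fun s => (s - r)⁻¹) =O[𝓝[>] r] fun s => h (u s) :=
    hgap.trans ((inv_sub_isBigO_of_tendsto_rpow_mul hγ1 hC.ne' hlim).comp_tendsto hu_to)
  by_contra hd
  have hderiv : (fun _ => (1 : ℝ)) =O[𝓝[>] r] fun s => deriv u s ^ 2 :=
    one_isBigO_of_tendsto ((hu.tendsto_deriv_nhdsGT hrδ hud).pow 2) (pow_ne_zero 2 hd)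
  have hweight : (fun _ => (1 : ℝ)) =O[𝓝[>] r] fun s => s ^ (N - 1) :=
    one_isBigO_of_tendsto ((continuous_pow _).continuousWithinAt.tendsto) (pow_ne_zero _ hr.ne')
  refine not_integrableOn_Ioo_of_inv_sub_isBigO hrδ ?_ hint
  simpa only [mul_one] using (hblowup.mul hderiv).mul hweight

theorem stmt19 (N : ℕ) (hN : 1 ≤ N) (r δ σ C γ d : ℝ)
    (hr : 0 < r) (hδ : 0 < δ) (hσ : 0 < σ) (hC : 0 < C) (hγ1 : 1 ≤ γ) (hγ2 : γ < 2)
    (h : ℝ → ℝ) (hcont : ContinuousOn h (Set.Ico 0 σ))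
    (hmono : MonotoneOn h (Set.Ico 0 σ)) (hnonneg : ∀ t ∈ Set.Ico 0 σ, 0 ≤ h t)
    (hlim : Tendsto (fun s => (σ - s) ^ γ * h s) (𝓝[<] σ) (𝓝 C))
    (u : ℝ → ℝ) (hu : ContDiffOn ℝ 1 u (Set.Icc r (r + δ)))
    (hur : u r = σ) (hrange : ∀ s ∈ Set.Icc r (r + δ), 0 ≤ u s ∧ u s ≤ σ)
    (hlt : ∀ s ∈ Set.Ioc r (r + δ), u s < σ)
    (hexp : Tendsto (fun s => (u s - σ - d * (s - r)) / (s - r)) (𝓝[>] r) (𝓝 0))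
    (hint : IntegrableOn (fun s => h (u s) * (deriv u s) ^ 2 * s ^ (N - 1))
      (Set.Ioo r (r + δ)) volume) :
    d = 0 :=
  stmt19_general N r δ σ C γ d hr hδ hC hγ1 h hlim u hu hur hlt hexp hint
end
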